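/- arXiv:math/0408208 — 14 statements merged into one kernel-verified Lean document; each statement's English description precedes it below -/
import Mathlib

section
/- Suppose X is nonempty and: (i) there is a continuous map m : X × X → X such that Δ(f)(s,t) = f(m(s,t)) for all f ∈ A and all s,t ∈ X, and m is associative; (ii) for all f, g ∈ A the functions Δ(f)·(1 ⊗ g) : (s,t) ↦ Δ(f)(s,t)·g(t) and Δ(f)·(g ⊗ 1) : (s,t) ↦ Δ(f)(s,t)·g(s) vanish at infinity on X × X; (iii) whenever f, g ∈ A satisfy Δ(f)·(1 ⊗ g) = 0 then f = 0 or g = 0, and whenever Δ(f)·(g ⊗ 1) = 0 then f = 0 or g = 0. Then (X, m) is a topological group: there exists an identity e ∈ X for m, every element has a two-sided inverse, and the inversion map is continuous. -/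
open scoped ZeroAtInfty BoundedContinuousFunction
open Set Filter Topology

/-!
The shear maps `(s, t) ↦ (s t, t)` and `(s, t) ↦ (s t, s)` pull `f ⊗ g` back to `Δ(f)(1 ⊗ g)` and
`Δ(f)(g ⊗ 1)`. Urysohn functions turn the vanishing condition into properness of these maps and
the injectivity condition into density of their (closed) images, so both are surjective. Then every
equation `s t = b` is solvable in `s` and in `t`, which makes the associative product a group law;
the first shear, being a closed bijection, is a homeomorphism, and inversion is read off its
inverse as `t⁻¹ = (shear⁻¹ (1, t)).1`.
-/

theorem exists_zeroAtInfty_one_zero_of_isCompact {X : Type*} [TopologicalSpace X]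
    [RegularSpace X] [LocallyCompactSpace X] {s t : Set X} (hs : IsCompact s) (ht : IsClosed t)
    (hd : Disjoint s t) : ∃ f : C₀(X, ℂ), EqOn f 1 s ∧ EqOn f 0 t := by
  obtain ⟨f, hf₁, hf₀, hfc, -⟩ := exists_continuous_one_zero_of_isCompact hs ht hd
  let F : C(X, ℂ) := ⟨fun x => (f x : ℂ), by fun_prop⟩
  have hF : HasCompactSupport F := hfc.comp_left Complex.ofReal_zero
  exact ⟨⟨F, hF.is_zero_at_infty⟩, fun x hx => by simp [F, hf₁ hx], fun x hx => by simp [F, hf₀ hx]⟩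

section SeparatingProducts

variable {Z X Y : Type*} [TopologicalSpace X] [TopologicalSpace Y]
  [LocallyCompactSpace X] [T2Space X] [LocallyCompactSpace Y] [T2Space Y] {θ : Z → X × Y}

theorem isProperMap_of_tendsto_mul_cocompact [TopologicalSpace Z] (hθ : Continuous θ)
    (hvan : ∀ (f : C₀(X, ℂ)) (g : C₀(Y, ℂ)),
      Tendsto (fun z => f (θ z).1 * g (θ z).2) (cocompact Z) (𝓝 0)) :
    IsProperMap θ := by
  refine isProperMap_iff_tendsto_cocompact.mpr ⟨hθ, hasBasis_cocompact.tendsto_right_iff.mpr ?_⟩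
  intro K hK
  obtain ⟨f, hf, -⟩ := exists_zeroAtInfty_one_zero_of_isCompact (hK.image continuous_fst)
    isClosed_empty (disjoint_empty _)
  obtain ⟨g, hg, -⟩ := exists_zeroAtInfty_one_zero_of_isCompact (hK.image continuous_snd)
    isClosed_empty (disjoint_empty _)
  filter_upwards [(hvan f g).eventually (Metric.ball_mem_nhds 0 one_pos)] with z hz hzK
  rw [hf (mem_image_of_mem _ hzK), hg (mem_image_of_mem _ hzK)] at hz
  simp at hz

theorem surjective_of_isClosed_range_of_mul_eq_zero (hθ : IsClosed (range θ))
    (hinj : ∀ (f : C₀(X, ℂ)) (g : C₀(Y, ℂ)), (∀ z, f (θ z).1 * g (θ z).2 = 0) → f = 0 ∨ g = 0) :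
    Function.Surjective θ := by
  intro q
  by_contra hq
  obtain ⟨U, V, hU, hV, hqU, hqV, hUV⟩ :=
    isOpen_prod_iff.mp hθ.isOpen_compl q.1 q.2 (by simpa [eq_comm] using hq)
  obtain ⟨f, hf₁, hf₀⟩ := exists_zeroAtInfty_one_zero_of_isCompact isCompact_singleton
    hU.isClosed_compl (disjoint_compl_right_iff_subset.mpr (singleton_subset_iff.mpr hqU))
  obtain ⟨g, hg₁, hg₀⟩ := exists_zeroAtInfty_one_zero_of_isCompact isCompact_singleton
    hV.isClosed_compl (disjoint_compl_right_iff_subset.mpr (singleton_subset_iff.mpr hqV))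
  have hfg : ∀ z, f (θ z).1 * g (θ z).2 = 0 := by
    intro z
    have : θ z ∉ U ×ˢ V := fun h => hUV h (mem_range_self z)
    rcases not_and_or.mp this with h | h
    · rw [hf₀ h, Pi.zero_apply, zero_mul]
    · rw [hg₀ h, Pi.zero_apply, mul_zero]
  rcases hinj f g hfg with rfl | rfl
  · simpa using hf₁ (mem_singleton q.1)
  · simpa using hg₁ (mem_singleton q.2)

end SeparatingProducts

section Algebra

variable {S : Type*} [Semigroup S]

theorem exists_one_mul_of_forall_exists_mul_eq [Nonempty S] (hL : ∀ b t : S, ∃ s, s * t = b)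
    (hR : ∀ b s : S, ∃ t, s * t = b) : ∃ e : S, ∀ x, e * x = x := by
  obtain ⟨a⟩ := ‹Nonempty S›
  obtain ⟨e, he⟩ := hL a a
  refine ⟨e, fun x => ?_⟩
  obtain ⟨y, rfl⟩ := hR x a
  rw [← mul_assoc, he]

noncomputable abbrev Group.ofExistsMulEq [Nonempty S] (hL : ∀ b t : S, ∃ s, s * t = b)
    (hR : ∀ b s : S, ∃ t, s * t = b) : Group S :=
  letI : One S := ⟨(exists_one_mul_of_forall_exists_mul_eq hL hR).choose⟩
  letI : Inv S := ⟨fun t => (hL 1 t).choose⟩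
  Group.ofLeftAxioms mul_assoc (exists_one_mul_of_forall_exists_mul_eq hL hR).choose_spec
    fun t => (hL 1 t).choose_spec

end Algebra

theorem continuous_inv_of_isClosedMap_shear {G : Type*} [TopologicalSpace G] [Group G]
    (h : IsClosedMap fun p : G × G => (p.1 * p.2, p.2)) : Continuous fun x : G => x⁻¹ := by
  let shear : G × G ≃ G × G :=
    { toFun := fun p => (p.1 * p.2, p.2)
      invFun := fun p => (p.1 * p.2⁻¹, p.2)
      left_inv := fun p => by simp
      right_inv := fun p => by simp }
  have hsymm : Continuous shear.symm := continuous_iff_isClosed.mpr fun C hC => by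
    rw [← Equiv.image_eq_preimage_symm]
    exact h C hC
  have hinv : (fun x : G => x⁻¹) = fun x => (shear.symm (1, x)).1 :=
    funext fun x => (one_mul x⁻¹).symm
  rw [hinv]
  fun_prop

/-- Paper's Theorem 1.9: if `X` carries a continuous associative product implemented by `Δ`,
`Δ(A)(1 ⊗ A)` and `Δ(A)(A ⊗ 1)` consist of functions vanishing at infinity (no density is
assumed), and both injectivity conditions `Δ(f)(1 ⊗ g) = 0 ⟹ f = 0 ∨ g = 0` and
`Δ(f)(g ⊗ 1) = 0 ⟹ f = 0 ∨ g = 0` hold, then `X` is a topological group. -/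
theorem stmt1 {X : Type*} [TopologicalSpace X] [LocallyCompactSpace X] [T2Space X]
    [Nonempty X]
    (Δ : C₀(X, ℂ) →⋆ₙₐ[ℂ] ((X × X) →ᵇ ℂ))
    (m : X × X → X) (hm : Continuous m)
    (hΔ : ∀ (f : C₀(X, ℂ)) (s t : X), Δ f (s, t) = f (m (s, t)))
    (hassoc : ∀ r s t : X, m (m (r, s), t) = m (r, m (s, t)))
    (hvan₁ : ∀ f g : C₀(X, ℂ),
      Filter.Tendsto (fun p : X × X => Δ f p * g p.2)
        (Filter.cocompact (X × X)) (nhds 0))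
    (hvan₂ : ∀ f g : C₀(X, ℂ),
      Filter.Tendsto (fun p : X × X => Δ f p * g p.1)
        (Filter.cocompact (X × X)) (nhds 0))
    (hinj₁ : ∀ f g : C₀(X, ℂ), (∀ p : X × X, Δ f p * g p.2 = 0) → f = 0 ∨ g = 0)
    (hinj₂ : ∀ f g : C₀(X, ℂ), (∀ p : X × X, Δ f p * g p.1 = 0) → f = 0 ∨ g = 0) :
    ∃ e : X, ∃ inv : X → X, Continuous inv ∧
      (∀ x : X, m (e, x) = x ∧ m (x, e) = x) ∧
      (∀ x : X, m (x, inv x) = e ∧ m (inv x, x) = e) := by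
  have hΔ' (f : C₀(X, ℂ)) (p : X × X) : Δ f p = f (m p) := hΔ f p.1 p.2
  have hproper₁ : IsProperMap fun p : X × X => (m p, p.2) :=
    isProperMap_of_tendsto_mul_cocompact (hm.prodMk continuous_snd) fun f g => by
      simpa only [hΔ'] using hvan₁ f g
  have hproper₂ : IsProperMap fun p : X × X => (m p, p.1) :=
    isProperMap_of_tendsto_mul_cocompact (hm.prodMk continuous_fst) fun f g => by
      simpa only [hΔ'] using hvan₂ f g
  have hsurj₁ := surjective_of_isClosed_range_of_mul_eq_zero hproper₁.isClosedMap.isClosed_range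
    fun f g h => hinj₁ f g (by simpa only [hΔ'] using h)
  have hsurj₂ := surjective_of_isClosed_range_of_mul_eq_zero hproper₂.isClosedMap.isClosed_range
    fun f g h => hinj₂ f g (by simpa only [hΔ'] using h)
  let _ : Semigroup X := { mul := fun s t => m (s, t), mul_assoc := hassoc }
  have hL (b t : X) : ∃ s, s * t = b := by
    obtain ⟨⟨s, t'⟩, h⟩ := hsurj₁ (b, t)
    obtain ⟨rfl, rfl⟩ := Prod.mk.inj h
    exact ⟨s, rfl⟩
  have hR (b s : X) : ∃ t, s * t = b := by
    obtain ⟨⟨s', t⟩, h⟩ := hsurj₂ (b, s)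
    obtain ⟨rfl, rfl⟩ := Prod.mk.inj h
    exact ⟨t, rfl⟩
  let _ : Group X := Group.ofExistsMulEq hL hR
  exact ⟨1, (·⁻¹), continuous_inv_of_isClosedMap_shear hproper₁.isClosedMap,
    fun x => ⟨one_mul x, mul_one x⟩, fun x => ⟨mul_inv_cancel x, inv_mul_cancel x⟩⟩
end

section
/- Let G be a nonempty compact Hausdorff topological space equipped with a continuous associative multiplication which is both left and right cancellative (x·z = y·z implies x = y, and z·x = z·y implies x = y). Then G is a group: there exists e ∈ G with e·x = x·e = x for all x ∈ G, and for every x ∈ G there exists y ∈ G with x·y = y·x = e. -/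
/-- Paper's Proposition 1.5: a nonempty compact Hausdorff semi-group with (two-sided)
cancellation is a group. -/
theorem stmt2 {G : Type*} [TopologicalSpace G] [CompactSpace G] [T2Space G] [Nonempty G]
    (mul : G → G → G)
    (hcont : Continuous fun p : G × G => mul p.1 p.2)
    (hassoc : ∀ x y z : G, mul (mul x y) z = mul x (mul y z))
    (hlc : ∀ x y z : G, mul z x = mul z y → x = y)
    (hrc : ∀ x y z : G, mul x z = mul y z → x = y) :
    ∃ e : G, (∀ x : G, mul e x = x ∧ mul x e = x) ∧
      ∀ x : G, ∃ y : G, mul x y = e ∧ mul y x = e := by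
  letI : Mul G := ⟨mul⟩
  letI : Semigroup G := { mul_assoc := hassoc }
  have hmul : ∀ a b : G, a * b = mul a b := fun _ _ => rfl
  have cml : ∀ r : G, Continuous (· * r) := fun r =>
    hcont.comp (continuous_id.prodMk continuous_const)
  have cmr : ∀ r : G, Continuous (r * ·) := fun r =>
    hcont.comp (continuous_const.prodMk continuous_id)
  obtain ⟨e, he⟩ := exists_idempotent_of_compact_t2_of_continuous_mul_left cml
  -- e is a two-sided identity, by cancellation
  have hid : ∀ x : G, e * x = x ∧ x * e = x := by
    intro x
    constructor
    · exact hlc _ _ e (by show e * (e * x) = e * x; rw [← mul_assoc, he])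
    · exact hrc _ _ e (by show x * e * e = x * e; rw [mul_assoc, he])
  refine ⟨e, hid, ?_⟩
  intro x
  -- powers of x
  let pow : ℕ → G := fun n => Nat.rec x (fun _ p => x * p) n
  have pow_succ : ∀ n, pow (n + 1) = x * pow n := fun n => rfl
  have pow_comm : ∀ n, x * pow n = pow n * x := by
    intro n
    induction n with
    | zero => rfl
    | succ n ih => rw [pow_succ, ih, ← mul_assoc, ih]
  have pow_add : ∀ m n, pow m * pow n = pow (m + n + 1) := by
    intro m n
    induction m with
    | zero =>
      rw [Nat.zero_add]
      rfl
    | succ m ih =>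
      rw [pow_succ, mul_assoc, ih, Nat.add_right_comm m 1 n]
  -- closed subsemigroup generated by x
  set S : Set G := closure (Set.range pow) with hS
  have hScomp : IsCompact S := isClosed_closure.isCompact
  have hSne : S.Nonempty := ⟨x, subset_closure ⟨0, rfl⟩⟩
  have hSmul : ∀ a ∈ S, ∀ b ∈ S, a * b ∈ S := by
    intro a ha b hb
    have h1 : ∀ c ∈ Set.range pow, ∀ d ∈ S, c * d ∈ S := by
      intro c hc d hd
      have : (c * ·) '' (Set.range pow) ⊆ Set.range pow := by
        rintro _ ⟨_, ⟨n, rfl⟩, rfl⟩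
        obtain ⟨m, rfl⟩ := hc
        exact ⟨m + n + 1, (pow_add m n).symm⟩
      have hmap : (c * ·) '' S ⊆ S := by
        calc (c * ·) '' S ⊆ closure ((c * ·) '' (Set.range pow)) :=
              image_closure_subset_closure_image (cmr c)
          _ ⊆ S := closure_mono this
      exact hmap ⟨d, hd, rfl⟩
    -- now a ∈ closure, b ∈ S fixed
    have hmap2 : (· * b) '' S ⊆ S := by
      have : (· * b) '' (Set.range pow) ⊆ S := by
        rintro _ ⟨_, ⟨n, rfl⟩, rfl⟩
        exact h1 _ ⟨n, rfl⟩ b hb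
      calc (· * b) '' S ⊆ closure ((· * b) '' (Set.range pow)) :=
            image_closure_subset_closure_image (cml b)
        _ ⊆ closure S := closure_mono this
        _ = S := closure_closure
    exact hmap2 ⟨a, ha, rfl⟩
  obtain ⟨f, hfS, hff⟩ := exists_idempotent_in_compact_subsemigroup cml S hSne hScomp hSmul
  -- f = e by cancellation
  have hfe : f = e := hlc _ _ f (by show f * f = f * e; rw [hff, (hid f).2])
  rw [hfe] at hfS
  -- everything in S commutes with x
  have hcommS : ∀ s ∈ S, x * s = s * x := by
    intro s hs
    have hcl : IsClosed {g : G | x * g = g * x} :=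
      isClosed_eq (cmr x) (cml x)
    have : Set.range pow ⊆ {g : G | x * g = g * x} := by
      rintro _ ⟨n, rfl⟩; exact pow_comm n
    exact (closure_minimal this hcl) hs
  -- e ∈ {x} ∪ closure of higher powers
  have hsplit : Set.range pow = {x} ∪ Set.range (fun n => pow (n + 1)) := by
    ext g
    constructor
    · rintro ⟨n, rfl⟩
      cases n with
      | zero => exact Or.inl rfl
      | succ n => exact Or.inr ⟨n, rfl⟩
    · rintro (rfl | ⟨n, rfl⟩)
      exacts [⟨0, rfl⟩, ⟨n + 1, rfl⟩]
  have heS : e ∈ ({x} : Set G) ∪ closure (Set.range (fun n => pow (n + 1))) := by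
    have := hfS
    rw [hS, hsplit, closure_union, closure_singleton] at this
    exact this
  rcases heS with hex | hehi
  · -- e = x : x is its own inverse
    rcases hex with rfl
    exact ⟨e, (hid e).1, (hid e).1⟩
  · -- e ∈ closure {x^{n+1}} ⊆ x * S (which is closed)
    have hxS_closed : IsClosed ((x * ·) '' S) :=
      (hScomp.image (cmr x)).isClosed
    have hsub : closure (Set.range (fun n => pow (n + 1))) ⊆ (x * ·) '' S := by
      apply closure_minimal _ hxS_closed
      rintro _ ⟨n, rfl⟩
      exact ⟨pow n, subset_closure ⟨n, rfl⟩, (pow_succ n).symm⟩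
    obtain ⟨s, hsS, hxs⟩ := hsub hehi
    have hxs' : x * s = e := hxs
    refine ⟨s, hxs', ?_⟩
    show s * x = e
    rw [← hcommS s hsS]
    exact hxs'
end

section
/- Assume that for all f, g, h ∈ A the function (s,t) ↦ Δ(f)(s,t)·g(s)·h(t) vanishes at infinity on X × X, and that the linear span of the set of all such functions {Δ(f)·(g ⊗ h) : f, g, h ∈ A} is dense in C₀(X × X, ℂ). Then there exists a continuous map m : X × X → X such that Δ(f)(s,t) = f(m(s,t)) for all f ∈ A and all s, t ∈ X. -/
open scoped ZeroAtInfty BoundedContinuousFunction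

/-!
For `p ∈ X × X`, `f ↦ Δ f p` is a character of `C₀(X)`. It is nonzero: otherwise every
`Δ(f)(g ⊗ h)` vanishes at `p`, and so would the closure of their span, which is all of
`C₀(X × X)`. Adjoining `∞`, a character `χ` of `C₀(X)` becomes the character
`F ↦ F ∞ + χ (F - F ∞)` of `C(X⁺)`, i.e. evaluation at a point of the one-point
compactification; that point is not `∞` because `χ ≠ 0`. This defines `m p`, and `m` is
continuous because the topology of a locally compact Hausdorff space is the weak topology
induced by `C₀(X)`.
-/

open Filter Topology
open scoped OnePoint

namespace ZeroAtInftyContinuousMap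

section Evaluation

variable {X 𝕜 : Type*} [TopologicalSpace X] [RCLike 𝕜]

variable (𝕜) in
def evalCLM (x : X) : C₀(X, 𝕜) →L[𝕜] 𝕜 where
  toFun u := u x
  map_add' _ _ := rfl
  map_smul' _ _ := rfl
  cont := (continuous_eval_const (F := X →ᵇ 𝕜) x).comp isometry_toBCF.continuous

@[simp] lemma evalCLM_apply (x : X) (u : C₀(X, 𝕜)) : evalCLM 𝕜 x u = u x := rfl

variable [LocallyCompactSpace X] [T2Space X]

lemma exists_apply_eq_one_of_isOpen {x : X} {V : Set X} (hV : IsOpen V) (hx : x ∈ V) :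
    ∃ f : C₀(X, 𝕜), f x = 1 ∧ ∀ y ∉ V, f y = 0 := by
  obtain ⟨g, hg1, hg0, hgc, -⟩ := exists_continuous_one_zero_of_isCompact isCompact_singleton
    hV.isClosed_compl (Set.disjoint_singleton_left.2 fun h => h hx)
  refine ⟨⟨(⟨RCLike.ofReal, RCLike.continuous_ofReal⟩ : C(ℝ, 𝕜)).comp g,
    (hgc.comp_left RCLike.ofReal_zero).is_zero_at_infty⟩, ?_, fun y hy => ?_⟩
  · show ((g x : ℝ) : 𝕜) = 1
    simp [hg1 rfl]
  · show ((g y : ℝ) : 𝕜) = 0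
    simp [hg0 hy]

lemma exists_mem_apply_ne_zero_of_dense_span {S : Set C₀(X, 𝕜)}
    (hS : Dense (Submodule.span 𝕜 S : Set C₀(X, 𝕜))) (x : X) : ∃ u ∈ S, u x ≠ 0 := by
  by_contra! hS0
  obtain ⟨f, hf, -⟩ := exists_apply_eq_one_of_isOpen (𝕜 := 𝕜) isOpen_univ (Set.mem_univ x)
  have hspan : Submodule.span 𝕜 S ≤ LinearMap.ker (evalCLM 𝕜 x : C₀(X, 𝕜) →ₗ[𝕜] 𝕜) :=
    Submodule.span_le.2 fun u hu => hS0 u hu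
  have hf0 : f ∈ LinearMap.ker (evalCLM 𝕜 x : C₀(X, 𝕜) →ₗ[𝕜] 𝕜) :=
    (evalCLM 𝕜 x).isClosed_ker.closure_subset_iff.2 hspan (hS f)
  simp [hf] at hf0

lemma continuous_of_forall_continuous_comp {Y : Type*} [TopologicalSpace Y] {m : Y → X}
    (hm : ∀ f : C₀(X, 𝕜), Continuous (f ∘ m)) : Continuous m := by
  refine continuous_iff_continuousAt.2 fun y V hV => ?_
  obtain ⟨U, hUV, hU, hyU⟩ := mem_nhds_iff.1 hV
  obtain ⟨f, hf1, hf0⟩ := exists_apply_eq_one_of_isOpen (𝕜 := 𝕜) hU hyU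
  have hnhds : {z | f (m z) ≠ 0} ∈ 𝓝 y :=
    (isOpen_ne_fun (hm f) continuous_const).mem_nhds (by simp [hf1])
  exact mem_map.2 (mem_of_superset hnhds fun z hz => hUV (by_contra fun h => hz (hf0 _ h)))

end Evaluation

section OnePoint

variable {X 𝕜 : Type*} [TopologicalSpace X] [T2Space X] [RCLike 𝕜]

def toOnePoint (f : C₀(X, 𝕜)) : C(OnePoint X, 𝕜) where
  toFun z := z.elim 0 f
  continuous_toFun := (OnePoint.continuous_iff _).2
    ⟨by simpa [coclosedCompact_eq_cocompact] using f.zero_at_infty', f.continuous⟩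

@[simp] lemma toOnePoint_coe (f : C₀(X, 𝕜)) (x : X) : f.toOnePoint x = f x := rfl

@[simp] lemma toOnePoint_infty (f : C₀(X, 𝕜)) : f.toOnePoint ∞ = 0 := rfl

def ofOnePointₗ : C(OnePoint X, 𝕜) →ₗ[𝕜] C₀(X, 𝕜) where
  toFun F :=
    { toFun x := F x - F ∞
      continuous_toFun := (F.continuous.comp OnePoint.continuous_coe).sub continuous_const
      zero_at_infty' := by
        have hF := (F.continuous.tendsto ∞).comp OnePoint.tendsto_coe_infty
        rw [coclosedCompact_eq_cocompact] at hF
        simpa using hF.sub_const (F ∞) }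
  map_add' F G := by
    ext x
    simp only [ContinuousMap.add_apply, coe_mk, coe_add, Pi.add_apply]
    ring
  map_smul' c F := by ext x; simp [mul_sub]

@[simp] lemma ofOnePointₗ_apply (F : C(OnePoint X, 𝕜)) (x : X) :
    ofOnePointₗ F x = F x - F ∞ := rfl

@[simp] lemma ofOnePointₗ_toOnePoint (f : C₀(X, 𝕜)) : ofOnePointₗ f.toOnePoint = f := by
  ext x; simp

lemma ofOnePointₗ_one : ofOnePointₗ (1 : C(OnePoint X, 𝕜)) = 0 := by
  ext x; simp

lemma ofOnePointₗ_mul (F G : C(OnePoint X, 𝕜)) :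
    ofOnePointₗ (F * G) =
      ofOnePointₗ F * ofOnePointₗ G + F ∞ • ofOnePointₗ G + G ∞ • ofOnePointₗ F := by
  ext x
  simp only [ofOnePointₗ_apply, ContinuousMap.mul_apply, coe_add, coe_mul, coe_smul, Pi.add_apply,
    Pi.mul_apply, Pi.smul_apply, smul_eq_mul]
  ring

end OnePoint

section Character

variable {X 𝕜 : Type*} [TopologicalSpace X] [T2Space X] [RCLike 𝕜]

def _root_.NonUnitalAlgHom.extendOnePoint (χ : C₀(X, 𝕜) →ₙₐ[𝕜] 𝕜) :
    C(OnePoint X, 𝕜) →ₐ[𝕜] 𝕜 :=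
  AlgHom.ofLinearMap
    { toFun F := F ∞ + χ (ofOnePointₗ F)
      map_add' F G := by simp only [ContinuousMap.add_apply, map_add]; ring
      map_smul' c F := by
        simp only [ContinuousMap.smul_apply, smul_eq_mul, map_smul, RingHom.id_apply]; ring }
    (by simp [ofOnePointₗ_one])
    (fun F G => by
      simp only [LinearMap.coe_mk, AddHom.coe_mk, ContinuousMap.mul_apply, ofOnePointₗ_mul,
        map_add, map_mul, map_smul, smul_eq_mul]
      ring)

@[simp] lemma _root_.NonUnitalAlgHom.extendOnePoint_toOnePoint (χ : C₀(X, 𝕜) →ₙₐ[𝕜] 𝕜)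
    (f : C₀(X, 𝕜)) : χ.extendOnePoint f.toOnePoint = χ f := by
  simp [NonUnitalAlgHom.extendOnePoint]

lemma exists_character_eq_eval [LocallyCompactSpace X] (χ : C₀(X, 𝕜) →ₙₐ[𝕜] 𝕜) (hχ : χ ≠ 0) :
    ∃ x : X, ∀ f : C₀(X, 𝕜), χ f = f x := by
  obtain ⟨z, hz⟩ := (WeakDual.CharacterSpace.continuousMapEval_bijective (OnePoint X) 𝕜).2
    (WeakDual.CharacterSpace.equivAlgHom.symm χ.extendOnePoint)
  have hzχ (f : C₀(X, 𝕜)) : f.toOnePoint z = χ f := by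
    simpa using DFunLike.congr_fun hz f.toOnePoint
  cases z with
  | infty => exact absurd (NonUnitalAlgHom.ext fun f => by simpa using (hzχ f).symm) hχ
  | coe x => exact ⟨x, fun f => (hzχ f).symm⟩

end Character

end ZeroAtInftyContinuousMap

open ZeroAtInftyContinuousMap in
theorem stmt3_general {X : Type*} [TopologicalSpace X] [LocallyCompactSpace X] [T2Space X]
    (Δ : C₀(X, ℂ) →⋆ₙₐ[ℂ] ((X × X) →ᵇ ℂ))
    (hdense : Dense
      ((Submodule.span ℂ {u : C₀(X × X, ℂ) | ∃ f g h : C₀(X, ℂ),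
          ∀ p : X × X, u p = Δ f p * g p.1 * h p.2} : Submodule ℂ C₀(X × X, ℂ)) :
        Set C₀(X × X, ℂ))) :
    ∃ m : X × X → X, Continuous m ∧
      ∀ (f : C₀(X, ℂ)) (s t : X), Δ f (s, t) = f (m (s, t)) := by
  have hchar (p : X × X) : ∃ x : X, ∀ f : C₀(X, ℂ), Δ f p = f x := by
    obtain ⟨u, ⟨f, g, h, hu⟩, hup⟩ := exists_mem_apply_ne_zero_of_dense_span hdense p
    let χ : C₀(X, ℂ) →ₙₐ[ℂ] ℂ := ((ContinuousMap.evalAlgHom ℂ ℂ p).comp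
      (BoundedContinuousFunction.toContinuousMapₐ ℂ)).toNonUnitalAlgHom.comp Δ.toNonUnitalAlgHom
    have hχ : χ ≠ 0 := ne_of_apply_ne (· f) fun (h0 : Δ f p = 0) =>
      hup (by rw [hu, h0, zero_mul, zero_mul])
    exact exists_character_eq_eval χ hχ
  choose m hm using hchar
  exact ⟨m, continuous_of_forall_continuous_comp (𝕜 := ℂ) fun f => (Δ f).continuous.congr
    fun p => hm p f, fun f s t => hm (s, t) f⟩

/-- Paper's Proposition 1.1: in the abelian case `A = C₀(X)`, non-degeneracy of the
comultiplication `Δ` (density of the span of `Δ(A)(A ⊗ A)` in `C₀(X × X)`) produces a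
continuous product on `X` with `Δ(f)(s,t) = f(st)`. -/
theorem stmt3 {X : Type*} [TopologicalSpace X] [LocallyCompactSpace X] [T2Space X]
    (Δ : C₀(X, ℂ) →⋆ₙₐ[ℂ] ((X × X) →ᵇ ℂ))
    (hvan : ∀ f g h : C₀(X, ℂ),
      Filter.Tendsto (fun p : X × X => Δ f p * g p.1 * h p.2)
        (Filter.cocompact (X × X)) (nhds 0))
    (hdense : Dense
      ((Submodule.span ℂ {u : C₀(X × X, ℂ) | ∃ f g h : C₀(X, ℂ),
          ∀ p : X × X, u p = Δ f p * g p.1 * h p.2} : Submodule ℂ C₀(X × X, ℂ)) :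
        Set C₀(X × X, ℂ))) :
    ∃ m : X × X → X, Continuous m ∧
      ∀ (f : C₀(X, ℂ)) (s t : X), Δ f (s, t) = f (m (s, t)) :=
  stmt3_general Δ hdense
end

section
/- Assume the linear span of {Δ(a)·(b ⊗ 1) : a, b ∈ A} equals A ⊗ A, and assume there exists a nonzero element h ∈ A with Δ(a)·(1 ⊗ h) = a ⊗ h for all a ∈ A. Then there exists a k-algebra homomorphism ε : A → k (in particular ε is nonzero, ε(1) = 1) such that a·h = ε(a)·h for all a ∈ A. -/
/-!
Since the elements `Δ(a)(b ⊗ 1)` span `A ⊗ A` and `Δ(a)(b ⊗ 1)(1 ⊗ h) = ab ⊗ h`, right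
multiplication by `1 ⊗ h` maps all of `A ⊗ A` into `A ⊗ h`. Applied to `1 ⊗ a` this gives
`1 ⊗ ah = c ⊗ h`, so `ah` lies on the line `k h`. A nonzero vector spanning a line that is stable
under `A` determines a character `ε` of `A` by `a h = ε(a) h`.
-/

open scoped TensorProduct

theorem TensorProduct.mem_span_singleton_of_tmul_eq_tmul {k M N : Type*} [Field k]
    [AddCommGroup M] [Module k M] [AddCommGroup N] [Module k N] {m m' : M} {n n' : N}
    (hm : m ≠ 0) (heq : m ⊗ₜ[k] n = m' ⊗ₜ[k] n') : n ∈ k ∙ n' := by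
  obtain ⟨f, hf⟩ := Module.Projective.exists_dual_eq_one k hm
  have := congrArg ((TensorProduct.lid k N).toLinearMap ∘ₗ LinearMap.rTensor N f) heq
  simp only [LinearMap.coe_comp, LinearEquiv.coe_coe, Function.comp_apply,
    LinearMap.rTensor_tmul, TensorProduct.lid_tmul, hf, one_smul] at this
  exact Submodule.mem_span_singleton.mpr ⟨f m', this.symm⟩

theorem exists_algHom_smul_eq_of_smul_mem_span_singleton {k A M : Type*} [Field k] [Ring A]
    [Algebra k A] [AddCommGroup M] [Module A M] [Module k M] [IsScalarTower k A M] {m : M}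
    (hm : m ≠ 0) (hline : ∀ a : A, a • m ∈ k ∙ m) :
    ∃ ε : A →ₐ[k] k, ∀ a : A, a • m = ε a • m := by
  obtain ⟨f, hf⟩ := Module.Projective.exists_dual_eq_one k hm
  let ε : A →ₗ[k] k := f ∘ₗ (LinearMap.toSpanSingleton A M m).restrictScalars k
  have hε : ∀ a : A, a • m = ε a • m := fun a => by
    obtain ⟨c, hc⟩ := Submodule.mem_span_singleton.mp (hline a)
    have hεa : ε a = c := by
      simp [ε, ← hc, hf]
    rw [hεa, hc]
  have hcancel : Function.Injective (fun c : k => c • m) := smul_left_injective k hm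
  refine ⟨AlgHom.ofLinearMap ε (hcancel ?_) fun a b => hcancel ?_, hε⟩
  · simp only [← hε, one_smul]
  · simp only [← hε, mul_smul, smul_comm (ε b) a, mul_comm (ε a) (ε b)]

theorem exists_mul_one_tmul_eq_tmul {R A : Type*} [CommSemiring R] [Semiring A] [Algebra R A]
    (Δ : A → A ⊗[R] A)
    (hspan : Submodule.span R {x : A ⊗[R] A | ∃ a b : A, x = Δ a * (b ⊗ₜ[R] (1 : A))} = ⊤)
    (h : A) (hh : ∀ a : A, Δ a * ((1 : A) ⊗ₜ[R] h) = a ⊗ₜ[R] h) (x : A ⊗[R] A) :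
    ∃ c : A, x * ((1 : A) ⊗ₜ[R] h) = c ⊗ₜ[R] h := by
  have hle : Submodule.span R {x : A ⊗[R] A | ∃ a b : A, x = Δ a * (b ⊗ₜ[R] (1 : A))} ≤
      (LinearMap.range ((TensorProduct.mk R A A).flip h)).comap
        (LinearMap.mulRight R ((1 : A) ⊗ₜ[R] h)) := by
    rw [Submodule.span_le]
    rintro _ ⟨a, b, rfl⟩
    refine ⟨a * b, ?_⟩
    have hcomm : b ⊗ₜ[R] (1 : A) * (1 : A) ⊗ₜ[R] h = (1 : A) ⊗ₜ[R] h * b ⊗ₜ[R] (1 : A) := by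
      simp only [Algebra.TensorProduct.tmul_mul_tmul, mul_one, one_mul]
    simp only [LinearMap.flip_apply, TensorProduct.mk_apply, LinearMap.mulRight_apply]
    rw [mul_assoc, hcomm, ← mul_assoc, hh, Algebra.TensorProduct.tmul_mul_tmul, mul_one]
  obtain ⟨c, hc⟩ := hle (hspan ▸ Submodule.mem_top : x ∈ _)
  exact ⟨c, hc.symm⟩

/-- Algebraic analogue of the paper's Lemma 3.2: if `Δ(A)(A ⊗ 1)` spans `A ⊗ A` and there is a
nonzero `h` with `Δ(a)(1 ⊗ h) = a ⊗ h`, then there is an algebra homomorphism `ε : A → k`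
with `a·h = ε(a)·h`. -/
theorem stmt6 {k A : Type*} [Field k] [Ring A] [Algebra k A]
    (Δ : A →ₐ[k] A ⊗[k] A)
    (hspan : Submodule.span k {x : A ⊗[k] A | ∃ a b : A, x = Δ a * (b ⊗ₜ[k] (1 : A))} = ⊤)
    (h : A) (hne : h ≠ 0)
    (hh : ∀ a : A, Δ a * ((1 : A) ⊗ₜ[k] h) = a ⊗ₜ[k] h) :
    ∃ ε : A →ₐ[k] k, ∀ a : A, a * h = ε a • h := by
  have : Nontrivial A := nontrivial_of_ne h 0 hne
  have hline : ∀ a : A, a • h ∈ k ∙ h := fun a => by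
    obtain ⟨c, hc⟩ := exists_mul_one_tmul_eq_tmul Δ hspan h hh ((1 : A) ⊗ₜ[k] a)
    rw [Algebra.TensorProduct.tmul_mul_tmul, one_mul] at hc
    exact TensorProduct.mem_span_singleton_of_tmul_eq_tmul one_ne_zero hc
  exact exists_algHom_smul_eq_of_smul_mem_span_singleton hne hline
end

section
/- Assume Δ is coassociative, the linear span of {Δ(a)·(b ⊗ 1) : a, b ∈ A} equals A ⊗ A, h ∈ A is nonzero with Δ(a)·(1 ⊗ h) = a ⊗ h for all a ∈ A, and ε : A → k is a linear map with a·h = ε(a)·h for all a ∈ A. Then for every a ∈ A: (id ⊗ ε)(Δ(a)) = a, (ε ⊗ id)(Δ(a)) = a, and Δ(a)·(h ⊗ 1) = h ⊗ a. (Here id ⊗ ε : A ⊗ A → A ⊗ k ≅ A and ε ⊗ id : A ⊗ A → k ⊗ A ≅ A are the slice maps.) -/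
open scoped TensorProduct

/-- Algebraic analogue of the paper's Lemma 3.5 / Proposition 3.7: counit property of `ε`
and `Δ(a)(h ⊗ 1) = h ⊗ a`. -/
theorem stmt7 {k A : Type*} [Field k] [Ring A] [Algebra k A]
    (Δ : A →ₐ[k] A ⊗[k] A)
    (hco : ∀ a : A,
      (Algebra.TensorProduct.assoc k k k A A A)
        ((Algebra.TensorProduct.map Δ (AlgHom.id k A)) (Δ a)) =
      (Algebra.TensorProduct.map (AlgHom.id k A) Δ) (Δ a))
    (hspan : Submodule.span k {x : A ⊗[k] A | ∃ a b : A, x = Δ a * (b ⊗ₜ[k] (1 : A))} = ⊤)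
    (h : A) (hne : h ≠ 0)
    (hh : ∀ a : A, Δ a * ((1 : A) ⊗ₜ[k] h) = a ⊗ₜ[k] h)
    (ε : A →ₗ[k] k) (hε : ∀ a : A, a * h = ε a • h) :
    ∀ a : A,
      (TensorProduct.rid k A) ((TensorProduct.map (LinearMap.id : A →ₗ[k] A) ε) (Δ a)) = a ∧
      (TensorProduct.lid k A) ((TensorProduct.map ε (LinearMap.id : A →ₗ[k] A)) (Δ a)) = a ∧
      Δ a * (h ⊗ₜ[k] (1 : A)) = h ⊗ₜ[k] a := by
  classical
  -- a functional φ with φ h = 1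
  obtain ⟨φ, hφ⟩ := (LinearMap.toSpanSingleton k A h).exists_leftInverse_of_injective
    (LinearMap.ker_toSpanSingleton (R := k) (M := A) hne)
  have hφh : φ h = 1 := by
    have := LinearMap.congr_fun hφ 1
    simpa [LinearMap.toSpanSingleton] using this
  -- injectivity of tensoring with h
  have injR : ∀ x y : A, x ⊗ₜ[k] h = y ⊗ₜ[k] h → x = y := by
    intro x y hxy
    have := congrArg (fun z => (TensorProduct.rid k A)
      ((TensorProduct.map (LinearMap.id : A →ₗ[k] A) φ) z)) hxy
    simpa [hφh] using this
  have injL : ∀ x y : A, h ⊗ₜ[k] x = h ⊗ₜ[k] y → x = y := by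
    intro x y hxy
    have := congrArg (fun z => (TensorProduct.lid k A)
      ((TensorProduct.map φ (LinearMap.id : A →ₗ[k] A)) z)) hxy
    simpa [hφh] using this
  -- the two slice maps
  set F : A ⊗[k] A →ₗ[k] A :=
    (TensorProduct.rid k A).toLinearMap ∘ₗ
      TensorProduct.map (LinearMap.id : A →ₗ[k] A) ε with hF
  set E : A ⊗[k] A →ₗ[k] A :=
    (TensorProduct.lid k A).toLinearMap ∘ₗ
      TensorProduct.map ε (LinearMap.id : A →ₗ[k] A) with hE
  have Ftmul : ∀ x y : A, F (x ⊗ₜ[k] y) = ε y • x := by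
    intro x y; simp [hF]
  have Etmul : ∀ x y : A, E (x ⊗ₜ[k] y) = ε x • y := by
    intro x y; simp [hE]
  -- multiplication by simple tensors as linear maps
  have mulR1 : ∀ (b : A) (z : A ⊗[k] A), z * (b ⊗ₜ[k] (1 : A)) =
      TensorProduct.map (LinearMap.mulRight k b) (LinearMap.id : A →ₗ[k] A) z := by
    intro b z
    induction z using TensorProduct.induction_on with
    | zero => simp
    | tmul x y => simp [Algebra.TensorProduct.tmul_mul_tmul]
    | add u v hu hv => simp [add_mul, hu, hv]
  have mulR2 : ∀ z : A ⊗[k] A, z * ((1 : A) ⊗ₜ[k] h) =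
      TensorProduct.map (LinearMap.id : A →ₗ[k] A) (LinearMap.mulRight k h) z := by
    intro z
    induction z using TensorProduct.induction_on with
    | zero => simp
    | tmul x y => simp [Algebra.TensorProduct.tmul_mul_tmul]
    | add u v hu hv => simp [add_mul, hu, hv]
  have mulR3 : ∀ z : A ⊗[k] A, z * (h ⊗ₜ[k] (1 : A)) =
      TensorProduct.map (LinearMap.mulRight k h) (LinearMap.id : A →ₗ[k] A) z := by
    intro b
    exact mulR1 h b
  -- step 1 : F ∘ Δ = id
  have key1 : ∀ z : A ⊗[k] A,
      TensorProduct.map (LinearMap.id : A →ₗ[k] A) (LinearMap.mulRight k h) z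
        = (F z) ⊗ₜ[k] h := by
    intro z
    induction z using TensorProduct.induction_on with
    | zero => simp
    | tmul x y =>
      simp only [TensorProduct.map_tmul, LinearMap.id_coe, id_eq,
        LinearMap.mulRight_apply, Ftmul, hε y]
      simp [TensorProduct.smul_tmul]
    | add u v hu hv => simp [hu, hv, TensorProduct.add_tmul]
  have step1 : ∀ a : A, F (Δ a) = a := by
    intro a
    apply injR
    rw [← key1, ← mulR2, hh]
  -- step 2 : (id ⊗ (E ∘ Δ)) (Δ a) = Δ a, via coassociativity
  have keyL : ∀ z : A ⊗[k] A,
      TensorProduct.map (LinearMap.id : A →ₗ[k] A) E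
        ((Algebra.TensorProduct.assoc k k k A A A)
          ((Algebra.TensorProduct.map Δ (AlgHom.id k A)) z)) = z := by
    intro z
    induction z using TensorProduct.induction_on with
    | zero => simp
    | tmul x y =>
      rw [Algebra.TensorProduct.map_tmul]
      have inner : ∀ w : A ⊗[k] A,
          TensorProduct.map (LinearMap.id : A →ₗ[k] A) E
            ((Algebra.TensorProduct.assoc k k k A A A) (w ⊗ₜ[k] y)) = (F w) ⊗ₜ[k] y := by
        intro w
        induction w using TensorProduct.induction_on with
        | zero => simp
        | tmul p q =>
          rw [Algebra.TensorProduct.assoc_tmul, TensorProduct.map_tmul]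
          simp only [LinearMap.id_coe, id_eq, Etmul, Ftmul]
          simp [TensorProduct.smul_tmul]
        | add u v hu hv => simp [TensorProduct.add_tmul, hu, hv]
      simp only [AlgHom.coe_id, id_eq]
      rw [inner (Δ x), step1]
    | add u v hu hv => simp only [map_add, hu, hv]
  have keyR : ∀ z : A ⊗[k] A,
      TensorProduct.map (LinearMap.id : A →ₗ[k] A) E
        ((Algebra.TensorProduct.map (AlgHom.id k A) Δ) z) =
      TensorProduct.map (LinearMap.id : A →ₗ[k] A) (E ∘ₗ Δ.toLinearMap) z := by
    intro z
    induction z using TensorProduct.induction_on with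
    | zero => simp
    | tmul x y => simp
    | add u v hu hv => simp only [map_add, hu, hv]
  have step2 : ∀ a : A,
      TensorProduct.map (LinearMap.id : A →ₗ[k] A) (E ∘ₗ Δ.toLinearMap) (Δ a) = Δ a := by
    intro a
    rw [← keyR, ← hco a, keyL]
  -- step 3 : id ⊗ (E ∘ Δ) = id on all of A ⊗ A, by the span assumption
  have step3 : TensorProduct.map (LinearMap.id : A →ₗ[k] A) (E ∘ₗ Δ.toLinearMap)
      = LinearMap.id := by
    have comm : ∀ (b : A) (z : A ⊗[k] A),
        TensorProduct.map (LinearMap.id : A →ₗ[k] A) (E ∘ₗ Δ.toLinearMap)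
          (TensorProduct.map (LinearMap.mulRight k b) (LinearMap.id : A →ₗ[k] A) z) =
        TensorProduct.map (LinearMap.mulRight k b) (LinearMap.id : A →ₗ[k] A)
          (TensorProduct.map (LinearMap.id : A →ₗ[k] A) (E ∘ₗ Δ.toLinearMap) z) := by
      intro b z
      induction z using TensorProduct.induction_on with
      | zero => simp
      | tmul x y => simp
      | add u v hu hv => simp only [map_add, hu, hv]
    apply LinearMap.ext_on hspan
    rintro x ⟨a, b, rfl⟩
    rw [LinearMap.id_apply, mulR1, comm, step2, ← mulR1]
  -- step 4 : E ∘ Δ = id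
  have step4 : ∀ a : A, E (Δ a) = a := by
    intro a
    apply injL
    have := LinearMap.congr_fun step3 (h ⊗ₜ[k] a)
    simpa using this
  -- conclusion
  intro a
  refine ⟨step1 a, step4 a, ?_⟩
  have key3 : ∀ z : A ⊗[k] A,
      TensorProduct.map (LinearMap.mulRight k h) (LinearMap.id : A →ₗ[k] A) z
        = h ⊗ₜ[k] (E z) := by
    intro z
    induction z using TensorProduct.induction_on with
    | zero => simp
    | tmul x y =>
      simp only [TensorProduct.map_tmul, LinearMap.id_coe, id_eq,
        LinearMap.mulRight_apply, Etmul, hε x]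
      simp [TensorProduct.smul_tmul]
    | add u v hu hv => simp [hu, hv, TensorProduct.tmul_add]
  rw [mulR3, key3, step4 a]
end

section
/- Assume Δ is coassociative. Let h ∈ A satisfy (1 ⊗ h)·Δ(a) = a ⊗ h for all a ∈ A, and assume that for c ∈ A, Δ(h)·(1 ⊗ c) = 0 implies c = 0. Then the linear map T₁ : A ⊗ A → A ⊗ A determined by T₁(a ⊗ b) = Δ(a)·(1 ⊗ b) is injective. -/
open scoped TensorProduct

/-- Algebraic analogue of the paper's Proposition 3.9: if `(1 ⊗ h)·Δ(a) = a ⊗ h` for all `a`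
and `Δ(h)·(1 ⊗ c) = 0` implies `c = 0`, then the linear map `T₁` determined by
`T₁(a ⊗ b) = Δ(a)·(1 ⊗ b)` is injective. -/
theorem stmt9 {k A : Type*} [Field k] [Ring A] [Algebra k A]
    (Δ : A →ₐ[k] A ⊗[k] A)
    (hco : ∀ a : A,
      (Algebra.TensorProduct.assoc k k k A A A)
        ((Algebra.TensorProduct.map Δ (AlgHom.id k A)) (Δ a)) =
      (Algebra.TensorProduct.map (AlgHom.id k A) Δ) (Δ a))
    (h : A)
    (hh : ∀ a : A, ((1 : A) ⊗ₜ[k] h) * Δ a = a ⊗ₜ[k] h)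
    (hinj : ∀ c : A, Δ h * ((1 : A) ⊗ₜ[k] c) = 0 → c = 0) :
    ∀ T₁ : A ⊗[k] A →ₗ[k] A ⊗[k] A,
      (∀ a b : A, T₁ (a ⊗ₜ[k] b) = Δ a * ((1 : A) ⊗ₜ[k] b)) → Function.Injective T₁ := by
  intro T₁ hT₁
  set g : A →ₗ[k] A ⊗[k] A :=
    (LinearMap.mulLeft k (Δ h)).comp
      (Algebra.TensorProduct.includeRight (R := k) (A := A) (B := A)).toLinearMap with hgdef
  have hg : ∀ c : A, g c = Δ h * ((1 : A) ⊗ₜ[k] c) := fun c => rfl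
  have hginj : Function.Injective g := by
    rw [injective_iff_map_eq_zero]
    intro c hc
    exact hinj c (by rw [← hg c]; exact hc)
  set Φ : (A ⊗[k] A) →ₗ[k] A ⊗[k] (A ⊗[k] A) :=
    (LinearMap.mulLeft k ((1 : A) ⊗ₜ[k] Δ h)).comp
      ((Algebra.TensorProduct.assoc k k k A A A).toLinearMap.comp
        (Algebra.TensorProduct.map Δ (AlgHom.id k A)).toLinearMap) with hΦdef
  have key : ∀ a : A,
      ((1 : A) ⊗ₜ[k] Δ h) * (Algebra.TensorProduct.map (AlgHom.id k A) Δ) (Δ a)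
        = a ⊗ₜ[k] Δ h := by
    intro a
    have := congrArg (Algebra.TensorProduct.map (AlgHom.id k A) Δ) (hh a)
    simpa [map_mul, Algebra.TensorProduct.map_tmul] using this
  have hcomp : Φ.comp T₁ = LinearMap.lTensor A g := by
    apply TensorProduct.ext'
    intro a b
    simp only [LinearMap.comp_apply, hT₁, LinearMap.lTensor_tmul, hg, hΦdef,
      LinearMap.coe_comp, Function.comp_apply, AlgEquiv.toLinearMap_apply,
      AlgHom.toLinearMap_apply, LinearMap.mulLeft_apply]
    rw [map_mul, map_mul, Algebra.TensorProduct.map_tmul]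
    simp only [map_one, AlgHom.coe_id, id_eq]
    rw [Algebra.TensorProduct.one_def, Algebra.TensorProduct.assoc_tmul, hco a,
      ← mul_assoc, key a, Algebra.TensorProduct.tmul_mul_tmul, mul_one]
  have hlt : Function.Injective (LinearMap.lTensor A g) :=
    Module.Flat.lTensor_preserves_injective_linearMap g hginj
  rw [← hcomp, LinearMap.coe_comp] at hlt
  exact Function.Injective.of_comp hlt
end

section
/- Let h ∈ A be an idempotent (h·h = h) and let ε : A → k be a linear map with h·c = ε(c)·h for all c ∈ A. Assume the linear span of {Δ(c)·(1 ⊗ d) : c, d ∈ A} equals A ⊗ A. Then for every a ∈ A, the element Δ(h)·(a ⊗ 1) belongs to the linear span of {Δ(h)·(1 ⊗ b) : b ∈ A}. -/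
open scoped TensorProduct

/-- Algebraic analogue of the paper's Proposition 3.12:
`Δ(h)(A ⊗ 1)` is contained in the span of `Δ(h)(1 ⊗ A)`. -/
theorem stmt10 {k A : Type*} [Field k] [Ring A] [Algebra k A]
    (Δ : A →ₐ[k] A ⊗[k] A)
    (h : A) (hidem : h * h = h)
    (ε : A →ₗ[k] k) (hε : ∀ c : A, h * c = ε c • h)
    (hspan : Submodule.span k {x : A ⊗[k] A | ∃ c d : A, x = Δ c * ((1 : A) ⊗ₜ[k] d)} = ⊤) :
    ∀ a : A, Δ h * (a ⊗ₜ[k] (1 : A)) ∈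
      Submodule.span k {x : A ⊗[k] A | ∃ b : A, x = Δ h * ((1 : A) ⊗ₜ[k] b)} := by
  intro a
  set S := Submodule.span k {x : A ⊗[k] A | ∃ b : A, x = Δ h * ((1 : A) ⊗ₜ[k] b)} with hS
  have key : ∀ y : A ⊗[k] A, Δ h * y ∈ S := by
    intro y
    have hy : y ∈ Submodule.span k
        {x : A ⊗[k] A | ∃ c d : A, x = Δ c * ((1 : A) ⊗ₜ[k] d)} := by
      rw [hspan]; trivial
    induction hy using Submodule.span_induction with
    | mem x hx =>
      obtain ⟨c, d, rfl⟩ := hx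
      have : Δ h * (Δ c * ((1 : A) ⊗ₜ[k] d)) = ε c • (Δ h * ((1 : A) ⊗ₜ[k] d)) := by
        rw [← mul_assoc, ← map_mul, hε c, map_smul, smul_mul_assoc]
      rw [this]
      exact Submodule.smul_mem _ _ (Submodule.subset_span ⟨d, rfl⟩)
    | zero => simpa using S.zero_mem
    | add x y _ _ hx hy => rw [mul_add]; exact S.add_mem hx hy
    | smul r x _ hx => rw [mul_smul_comm]; exact S.smul_mem r hx
  exact key _
end

section
/- Assume Δ is coassociative and h ∈ A satisfies Δ(a)·(1 ⊗ h) = (1 ⊗ h)·Δ(a) = a ⊗ h and Δ(a)·(h ⊗ 1) = (h ⊗ 1)·Δ(a) = h ⊗ a for every a ∈ A. Then in A ⊗ A ⊗ A ⊗ A: Δ(h)₂₃ · Δ(h)₁₄ = Δ(h)₂₃ · Δ⁽³⁾(h). -/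
open scoped TensorProduct

section Legs

variable (k A : Type*) [Field k] [Ring A] [Algebra k A]

/-- The embedding `A ⊗ A → A ⊗ A ⊗ A ⊗ A`, `x ⊗ y ↦ x ⊗ y ⊗ 1 ⊗ 1` (legs 1,2). -/
noncomputable def leg12 : A ⊗[k] A →ₐ[k] A ⊗[k] (A ⊗[k] (A ⊗[k] A)) :=
  Algebra.TensorProduct.map (AlgHom.id k A) Algebra.TensorProduct.includeLeft

/-- The embedding `A ⊗ A → A ⊗ A ⊗ A ⊗ A`, `x ⊗ y ↦ 1 ⊗ x ⊗ y ⊗ 1` (legs 2,3). -/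
noncomputable def leg23 : A ⊗[k] A →ₐ[k] A ⊗[k] (A ⊗[k] (A ⊗[k] A)) :=
  (Algebra.TensorProduct.includeRight :
      (A ⊗[k] (A ⊗[k] A)) →ₐ[k] A ⊗[k] (A ⊗[k] (A ⊗[k] A))).comp
    (Algebra.TensorProduct.map (AlgHom.id k A) Algebra.TensorProduct.includeLeft)

/-- The embedding `A ⊗ A → A ⊗ A ⊗ A ⊗ A`, `x ⊗ y ↦ 1 ⊗ 1 ⊗ x ⊗ y` (legs 3,4). -/
noncomputable def leg34 : A ⊗[k] A →ₐ[k] A ⊗[k] (A ⊗[k] (A ⊗[k] A)) :=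
  (Algebra.TensorProduct.includeRight :
      (A ⊗[k] (A ⊗[k] A)) →ₐ[k] A ⊗[k] (A ⊗[k] (A ⊗[k] A))).comp
    (Algebra.TensorProduct.includeRight : (A ⊗[k] A) →ₐ[k] A ⊗[k] (A ⊗[k] A))

/-- The embedding `A ⊗ A → A ⊗ A ⊗ A ⊗ A`, `x ⊗ y ↦ x ⊗ 1 ⊗ 1 ⊗ y` (legs 1,4). -/
noncomputable def leg14 : A ⊗[k] A →ₐ[k] A ⊗[k] (A ⊗[k] (A ⊗[k] A)) :=
  Algebra.TensorProduct.map (AlgHom.id k A)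
    ((Algebra.TensorProduct.includeRight : (A ⊗[k] A) →ₐ[k] A ⊗[k] (A ⊗[k] A)).comp
      (Algebra.TensorProduct.includeRight : A →ₐ[k] A ⊗[k] A))

variable (Δ : A →ₐ[k] A ⊗[k] A)

/-- `Δ⁽²⁾ = (Δ ⊗ id) ∘ Δ`, re-associated to land in `A ⊗ (A ⊗ A)`. -/
noncomputable def delta2 : A →ₐ[k] A ⊗[k] (A ⊗[k] A) :=
  ((Algebra.TensorProduct.assoc k k k A A A).toAlgHom.comp
    (Algebra.TensorProduct.map Δ (AlgHom.id k A))).comp Δ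

/-- `Δ⁽³⁾ = (Δ ⊗ id ⊗ id) ∘ (Δ ⊗ id) ∘ Δ`, re-associated to land in `A ⊗ (A ⊗ (A ⊗ A))`. -/
noncomputable def delta3 : A →ₐ[k] A ⊗[k] (A ⊗[k] (A ⊗[k] A)) :=
  ((Algebra.TensorProduct.assoc k k k A A (A ⊗[k] A)).toAlgHom.comp
    (Algebra.TensorProduct.map Δ (AlgHom.id k (A ⊗[k] A)))).comp (delta2 k A Δ)

end Legs

set_option synthInstance.maxHeartbeats 400000
set_option maxHeartbeats 1000000

section Aux

variable {k A : Type*} [Field k] [Ring A] [Algebra k A]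

private lemma aux_assoc3 (u : A ⊗[k] A) (c : A) :
    (Algebra.TensorProduct.assoc k k k A A A) (u ⊗ₜ[k] c) =
    (Algebra.TensorProduct.map (AlgHom.id k A)
      (Algebra.TensorProduct.includeLeft : A →ₐ[k] A ⊗[k] A)) u *
      ((1:A) ⊗ₜ[k] ((1:A) ⊗ₜ[k] c)) := by
  induction u using TensorProduct.induction_on with
  | zero => simp [TensorProduct.zero_tmul]
  | tmul x y =>
      simp [Algebra.TensorProduct.assoc_tmul, Algebra.TensorProduct.tmul_mul_tmul]
  | add u v hu hv =>
      simp only [TensorProduct.add_tmul, map_add, hu, hv, add_mul]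

private lemma aux_assoc4 (u : A ⊗[k] A) (c : A ⊗[k] A) :
    (Algebra.TensorProduct.assoc k k k A A (A ⊗[k] A)) (u ⊗ₜ[k] c) =
    (Algebra.TensorProduct.map (AlgHom.id k A)
      (Algebra.TensorProduct.includeLeft : A →ₐ[k] A ⊗[k] (A ⊗[k] A))) u *
      ((1:A) ⊗ₜ[k] ((1:A) ⊗ₜ[k] c)) := by
  induction u using TensorProduct.induction_on with
  | zero => simp [TensorProduct.zero_tmul]
  | tmul x y =>
      simp [Algebra.TensorProduct.assoc_tmul, Algebra.TensorProduct.tmul_mul_tmul]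
  | add u v hu hv =>
      simp only [TensorProduct.add_tmul, map_add, hu, hv, add_mul]

private lemma aux_incl (Δ : A →ₐ[k] A ⊗[k] A) (u : A ⊗[k] A) :
    (Algebra.TensorProduct.map (AlgHom.id k A) (Algebra.TensorProduct.map (AlgHom.id k A) Δ))
      ((Algebra.TensorProduct.map (AlgHom.id k A)
        (Algebra.TensorProduct.includeLeft : A →ₐ[k] A ⊗[k] A)) u) =
    (Algebra.TensorProduct.map (AlgHom.id k A)
      (Algebra.TensorProduct.includeLeft : A →ₐ[k] A ⊗[k] (A ⊗[k] A))) u := by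
  induction u using TensorProduct.induction_on with
  | zero => simp
  | tmul x y => simp [Algebra.TensorProduct.one_def]
  | add u v hu hv => simp only [map_add, hu, hv]

variable (Δ : A →ₐ[k] A ⊗[k] A)

private lemma aux_delta2_eq
    (hco : ∀ a : A,
      (Algebra.TensorProduct.assoc k k k A A A)
        ((Algebra.TensorProduct.map Δ (AlgHom.id k A)) (Δ a)) =
      (Algebra.TensorProduct.map (AlgHom.id k A) Δ) (Δ a)) (a : A) :
    delta2 k A Δ a = (Algebra.TensorProduct.map (AlgHom.id k A) Δ) (Δ a) := by
  simpa [delta2] using hco a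

private lemma aux_P (w : A ⊗[k] A) :
    (Algebra.TensorProduct.assoc k k k A A (A ⊗[k] A))
      ((Algebra.TensorProduct.map Δ (AlgHom.id k (A ⊗[k] A)))
        ((Algebra.TensorProduct.map (AlgHom.id k A) Δ) w)) =
    (Algebra.TensorProduct.map (AlgHom.id k A)
        (Algebra.TensorProduct.map (AlgHom.id k A) Δ))
      ((Algebra.TensorProduct.assoc k k k A A A)
        ((Algebra.TensorProduct.map Δ (AlgHom.id k A)) w)) := by
  induction w using TensorProduct.induction_on with
  | zero => simp
  | tmul a b =>
      rw [Algebra.TensorProduct.map_tmul, Algebra.TensorProduct.map_tmul,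
        Algebra.TensorProduct.map_tmul]
      simp only [AlgHom.id_apply]
      rw [aux_assoc4, aux_assoc3, map_mul, aux_incl]
      simp
  | add u v hu hv => simp only [map_add, hu, hv]

private lemma aux_delta3_eq
    (hco : ∀ a : A,
      (Algebra.TensorProduct.assoc k k k A A A)
        ((Algebra.TensorProduct.map Δ (AlgHom.id k A)) (Δ a)) =
      (Algebra.TensorProduct.map (AlgHom.id k A) Δ) (Δ a)) (h : A) :
    delta3 k A Δ h =
      (Algebra.TensorProduct.map (AlgHom.id k A)
        (Algebra.TensorProduct.map (AlgHom.id k A) Δ)) (delta2 k A Δ h) := by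
  have h1 : delta3 k A Δ h =
      (Algebra.TensorProduct.assoc k k k A A (A ⊗[k] A))
        ((Algebra.TensorProduct.map Δ (AlgHom.id k (A ⊗[k] A))) (delta2 k A Δ h)) := by
    simp [delta3]
  rw [h1, aux_delta2_eq Δ hco h, aux_P, hco h, ← aux_delta2_eq Δ hco h]

/-- `φ = id ⊗ Δ ⊗ id : A ⊗ A ⊗ A → A ⊗ A ⊗ A ⊗ A` (nested form). -/
private noncomputable def phiM : A ⊗[k] (A ⊗[k] A) →ₐ[k] A ⊗[k] (A ⊗[k] (A ⊗[k] A)) :=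
  Algebra.TensorProduct.map (AlgHom.id k A)
    ((Algebra.TensorProduct.assoc k k k A A A).toAlgHom.comp
      (Algebra.TensorProduct.map Δ (AlgHom.id k A)))

private lemma aux_core (h : A)
    (hh1' : ∀ a : A, ((1 : A) ⊗ₜ[k] h) * Δ a = a ⊗ₜ[k] h) (w : A ⊗[k] A) :
    ((1:A) ⊗ₜ[k] (h ⊗ₜ[k] (1:A))) *
      (Algebra.TensorProduct.map (AlgHom.id k A)
        (Algebra.TensorProduct.includeRight : A →ₐ[k] A ⊗[k] A)) w =
    ((1:A) ⊗ₜ[k] (h ⊗ₜ[k] (1:A))) *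
      (Algebra.TensorProduct.assoc k k k A A A)
        ((Algebra.TensorProduct.map Δ (AlgHom.id k A)) w) := by
  induction w using TensorProduct.induction_on with
  | zero => simp
  | tmul a b =>
      rw [Algebra.TensorProduct.map_tmul, Algebra.TensorProduct.map_tmul]
      simp only [AlgHom.id_apply, Algebra.TensorProduct.includeRight_apply]
      have hM : ((1:A) ⊗ₜ[k] (h ⊗ₜ[k] (1:A))) =
          (Algebra.TensorProduct.assoc k k k A A A) ((((1:A) ⊗ₜ[k] h)) ⊗ₜ[k] (1:A)) := by
        simp [Algebra.TensorProduct.assoc_tmul]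
      rw [hM, ← map_mul, Algebra.TensorProduct.tmul_mul_tmul, hh1' a, one_mul]
      simp [Algebra.TensorProduct.assoc_tmul, Algebra.TensorProduct.tmul_mul_tmul]
  | add u v hu hv => simp only [map_add, mul_add, hu, hv]

private lemma aux_phi_M (h : A) :
    phiM Δ ((1:A) ⊗ₜ[k] (h ⊗ₜ[k] (1:A))) = leg23 k A (Δ h) := by
  simp only [phiM, Algebra.TensorProduct.map_tmul, AlgHom.id_apply, AlgHom.coe_comp,
    Function.comp_apply, Algebra.TensorProduct.map_tmul, AlgEquiv.toAlgHom_eq_coe,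
    AlgEquiv.coe_algHom, Algebra.TensorProduct.includeRight_apply, leg23]
  congr 1
  exact (aux_assoc3 (Δ h) (1:A)).trans (by simp [← Algebra.TensorProduct.one_def])

private lemma aux_phi_j13 (w : A ⊗[k] A) :
    phiM Δ ((Algebra.TensorProduct.map (AlgHom.id k A)
      (Algebra.TensorProduct.includeRight : A →ₐ[k] A ⊗[k] A)) w) = leg14 k A w := by
  induction w using TensorProduct.induction_on with
  | zero => simp
  | tmul a b =>
      simp [phiM, leg14, Algebra.TensorProduct.one_def,
        Algebra.TensorProduct.assoc_tmul]
  | add u v hu hv => simp only [map_add, hu, hv]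

private lemma aux_phi_C
    (hco : ∀ a : A,
      (Algebra.TensorProduct.assoc k k k A A A)
        ((Algebra.TensorProduct.map Δ (AlgHom.id k A)) (Δ a)) =
      (Algebra.TensorProduct.map (AlgHom.id k A) Δ) (Δ a)) (w : A ⊗[k] A) :
    phiM Δ ((Algebra.TensorProduct.map (AlgHom.id k A) Δ) w) =
    (Algebra.TensorProduct.map (AlgHom.id k A)
      (Algebra.TensorProduct.map (AlgHom.id k A) Δ))
      ((Algebra.TensorProduct.map (AlgHom.id k A) Δ) w) := by
  induction w using TensorProduct.induction_on with
  | zero => simp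
  | tmul a b =>
      simp only [Algebra.TensorProduct.map_tmul, AlgHom.id_apply, phiM, AlgHom.coe_comp,
        Function.comp_apply, AlgEquiv.toAlgHom_eq_coe, AlgEquiv.coe_algHom]
      congr 1
      exact hco b
  | add u v hu hv => simp only [map_add, hu, hv]

end Aux


/-- Algebraic analogue of the paper's Proposition 3.15:
`Δ(h)₂₃ Δ(h)₁₄ = Δ(h)₂₃ Δ⁽³⁾(h)`. -/
theorem stmt11 {k A : Type*} [Field k] [Ring A] [Algebra k A]
    (Δ : A →ₐ[k] A ⊗[k] A)
    (hco : ∀ a : A,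
      (Algebra.TensorProduct.assoc k k k A A A)
        ((Algebra.TensorProduct.map Δ (AlgHom.id k A)) (Δ a)) =
      (Algebra.TensorProduct.map (AlgHom.id k A) Δ) (Δ a))
    (h : A)
    (hh1 : ∀ a : A, Δ a * ((1 : A) ⊗ₜ[k] h) = a ⊗ₜ[k] h)
    (hh1' : ∀ a : A, ((1 : A) ⊗ₜ[k] h) * Δ a = a ⊗ₜ[k] h)
    (hh2 : ∀ a : A, Δ a * (h ⊗ₜ[k] (1 : A)) = h ⊗ₜ[k] a)
    (hh2' : ∀ a : A, (h ⊗ₜ[k] (1 : A)) * Δ a = h ⊗ₜ[k] a) :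
    leg23 k A (Δ h) * leg14 k A (Δ h) = leg23 k A (Δ h) * delta3 k A Δ h := by
  rw [← aux_phi_M Δ h, ← aux_phi_j13 Δ (Δ h), ← map_mul, aux_core Δ h hh1' (Δ h),
    hco h, map_mul, aux_phi_M Δ h, aux_phi_C Δ hco (Δ h),
    aux_delta3_eq Δ hco h, aux_delta2_eq Δ hco h]
end

section
/- Assume Δ is coassociative and h ∈ A satisfies Δ(a)·(1 ⊗ h) = (1 ⊗ h)·Δ(a) = a ⊗ h and Δ(a)·(h ⊗ 1) = (h ⊗ 1)·Δ(a) = h ⊗ a for every a ∈ A. Then for every a ∈ A, in A ⊗ A ⊗ A: (Δ(h) ⊗ 1)·(a ⊗ 1 ⊗ 1)·(1 ⊗ Δ(h)) = (Δ(h) ⊗ 1)·(1 ⊗ 1 ⊗ a)·(1 ⊗ Δ(h)). -/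
open scoped TensorProduct

lemma assoc_tmul_aux {k A : Type*} [Field k] [Ring A] [Algebra k A]
    (w : A ⊗[k] A) (a : A) :
    (Algebra.TensorProduct.assoc k k k A A A) (w ⊗ₜ[k] a) =
      (Algebra.TensorProduct.map (AlgHom.id k A)
        (Algebra.TensorProduct.includeLeft : A →ₐ[k] A ⊗[k] A)) w *
        ((1 : A) ⊗ₜ[k] ((1 : A) ⊗ₜ[k] a)) := by
  induction w using TensorProduct.induction_on with
  | zero => simp [TensorProduct.zero_tmul]
  | tmul x y =>
      simp [Algebra.TensorProduct.assoc_tmul, Algebra.TensorProduct.tmul_mul_tmul]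
  | add u v hu hv =>
      simp [TensorProduct.add_tmul, hu, hv, add_mul]

/-- Algebraic analogue of the paper's Proposition 4.4: in `A ⊗ A ⊗ A`,
`(Δ(h) ⊗ 1)(a ⊗ 1 ⊗ 1)(1 ⊗ Δ(h)) = (Δ(h) ⊗ 1)(1 ⊗ 1 ⊗ a)(1 ⊗ Δ(h))`. -/
theorem stmt14 {k A : Type*} [Field k] [Ring A] [Algebra k A]
    (Δ : A →ₐ[k] A ⊗[k] A)
    (hco : ∀ a : A,
      (Algebra.TensorProduct.assoc k k k A A A)
        ((Algebra.TensorProduct.map Δ (AlgHom.id k A)) (Δ a)) =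
      (Algebra.TensorProduct.map (AlgHom.id k A) Δ) (Δ a))
    (h : A)
    (hh1 : ∀ a : A, Δ a * ((1 : A) ⊗ₜ[k] h) = a ⊗ₜ[k] h)
    (hh1' : ∀ a : A, ((1 : A) ⊗ₜ[k] h) * Δ a = a ⊗ₜ[k] h)
    (hh2 : ∀ a : A, Δ a * (h ⊗ₜ[k] (1 : A)) = h ⊗ₜ[k] a)
    (hh2' : ∀ a : A, (h ⊗ₜ[k] (1 : A)) * Δ a = h ⊗ₜ[k] a)
    (a : A) :
    (Algebra.TensorProduct.map (AlgHom.id k A)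
        (Algebra.TensorProduct.includeLeft : A →ₐ[k] A ⊗[k] A)) (Δ h) *
        (a ⊗ₜ[k] (1 : A ⊗[k] A)) *
        (Algebra.TensorProduct.includeRight : (A ⊗[k] A) →ₐ[k] A ⊗[k] (A ⊗[k] A)) (Δ h) =
      (Algebra.TensorProduct.map (AlgHom.id k A)
        (Algebra.TensorProduct.includeLeft : A →ₐ[k] A ⊗[k] A)) (Δ h) *
        ((1 : A) ⊗ₜ[k] ((1 : A) ⊗ₜ[k] a)) *
        (Algebra.TensorProduct.includeRight : (A ⊗[k] A) →ₐ[k] A ⊗[k] (A ⊗[k] A)) (Δ h) := by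
  set L := (Algebra.TensorProduct.map (AlgHom.id k A)
      (Algebra.TensorProduct.includeLeft : A →ₐ[k] A ⊗[k] A)) with hL
  set S := (Algebra.TensorProduct.map (AlgHom.id k A) Δ) (Δ a) with hSdef
  -- Fact 1 : S * (1 ⊗ Δ h) = a ⊗ Δ h   (apply id ⊗ Δ to hh1 a)
  have f1 : S * ((1 : A) ⊗ₜ[k] Δ h) = a ⊗ₜ[k] Δ h := by
    have := congrArg (Algebra.TensorProduct.map (AlgHom.id k A) Δ) (hh1 a)
    simpa [hSdef, map_mul, Algebra.TensorProduct.map_tmul] using this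
  -- Fact 2 : L (Δ h) * S = L (Δ h) * (1 ⊗ (1 ⊗ a))  (apply assoc ∘ (Δ ⊗ id) to hh2' a)
  have f2 : L (Δ h) * S = L (Δ h) * ((1 : A) ⊗ₜ[k] ((1 : A) ⊗ₜ[k] a)) := by
    have := congrArg (fun x => (Algebra.TensorProduct.assoc k k k A A A)
        ((Algebra.TensorProduct.map Δ (AlgHom.id k A)) x)) (hh2' a)
    simp only [map_mul, Algebra.TensorProduct.map_tmul, AlgHom.coe_id, id_eq] at this
    rw [hco a, assoc_tmul_aux (Δ h) (1 : A), assoc_tmul_aux (Δ h) a] at this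
    rw [show ((1:A) ⊗ₜ[k] ((1:A) ⊗ₜ[k] (1:A))) = (1 : A ⊗[k] (A ⊗[k] A)) from rfl,
      mul_one] at this
    simpa [hSdef, hL] using this
  -- Now combine.
  have key : (a ⊗ₜ[k] (1 : A ⊗[k] A)) *
      (Algebra.TensorProduct.includeRight : (A ⊗[k] A) →ₐ[k] A ⊗[k] (A ⊗[k] A)) (Δ h)
      = S * ((1 : A) ⊗ₜ[k] Δ h) := by
    rw [f1]
    simp [Algebra.TensorProduct.includeRight_apply, Algebra.TensorProduct.tmul_mul_tmul]
  calc L (Δ h) * (a ⊗ₜ[k] (1 : A ⊗[k] A)) *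
        (Algebra.TensorProduct.includeRight : (A ⊗[k] A) →ₐ[k] A ⊗[k] (A ⊗[k] A)) (Δ h)
      = L (Δ h) * S * ((1 : A) ⊗ₜ[k] Δ h) := by rw [mul_assoc, key, mul_assoc]
    _ = L (Δ h) * ((1 : A) ⊗ₜ[k] ((1 : A) ⊗ₜ[k] a)) * ((1 : A) ⊗ₜ[k] Δ h) := by rw [f2]
    _ = _ := by simp [Algebra.TensorProduct.includeRight_apply]
end

section
/- Assume Δ is coassociative, h ∈ A satisfies Δ(a)·(1 ⊗ h) = (1 ⊗ h)·Δ(a) = a ⊗ h and Δ(a)·(h ⊗ 1) = (h ⊗ 1)·Δ(a) = h ⊗ a for every a ∈ A, and assume that for c ∈ A, Δ(h)·(1 ⊗ c) = 0 implies c = 0. If a, b ∈ A satisfy Δ(h)·(a ⊗ 1) = Δ(h)·(1 ⊗ b) (i.e. b = S(a) for the antipode defined by this relation), then (1 ⊗ a)·Δ(h) = (b ⊗ 1)·Δ(h). -/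
open scoped TensorProduct

section AuxStmt15

variable {k A : Type*} [Field k] [Ring A] [Algebra k A]

/-- Auxiliary computation: multiplying `assoc (u ⊗ 1)` by `1 ⊗ (c ⊗ d)`. -/
private lemma stmt15_aux (u : A ⊗[k] A) (c d : A) :
    (Algebra.TensorProduct.assoc k k k A A A) (u ⊗ₜ[k] (1 : A)) *
      ((1 : A) ⊗ₜ[k] (c ⊗ₜ[k] d)) =
    (Algebra.TensorProduct.assoc k k k A A A) ((u * ((1 : A) ⊗ₜ[k] c)) ⊗ₜ[k] d) := by
  induction u using TensorProduct.induction_on with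
  | zero => simp
  | tmul x y =>
      simp [Algebra.TensorProduct.assoc_tmul, Algebra.TensorProduct.tmul_mul_tmul]
  | add u v hu hv =>
      simp only [TensorProduct.add_tmul, add_mul, map_add, hu, hv]

end AuxStmt15

/-- Algebraic analogue of the paper's Proposition 4.5: if `Δ(h)(a ⊗ 1) = Δ(h)(1 ⊗ b)`
(i.e. `b = S(a)`), then `(1 ⊗ a)Δ(h) = (b ⊗ 1)Δ(h)`. -/
theorem stmt15 {k A : Type*} [Field k] [Ring A] [Algebra k A]
    (Δ : A →ₐ[k] A ⊗[k] A)
    (hco : ∀ a : A,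
      (Algebra.TensorProduct.assoc k k k A A A)
        ((Algebra.TensorProduct.map Δ (AlgHom.id k A)) (Δ a)) =
      (Algebra.TensorProduct.map (AlgHom.id k A) Δ) (Δ a))
    (h : A)
    (hh1 : ∀ a : A, Δ a * ((1 : A) ⊗ₜ[k] h) = a ⊗ₜ[k] h)
    (hh1' : ∀ a : A, ((1 : A) ⊗ₜ[k] h) * Δ a = a ⊗ₜ[k] h)
    (hh2 : ∀ a : A, Δ a * (h ⊗ₜ[k] (1 : A)) = h ⊗ₜ[k] a)
    (hh2' : ∀ a : A, (h ⊗ₜ[k] (1 : A)) * Δ a = h ⊗ₜ[k] a)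
    (hinj : ∀ c : A, Δ h * ((1 : A) ⊗ₜ[k] c) = 0 → c = 0)
    (a b : A)
    (hab : Δ h * (a ⊗ₜ[k] (1 : A)) = Δ h * ((1 : A) ⊗ₜ[k] b)) :
    ((1 : A) ⊗ₜ[k] a) * Δ h = (b ⊗ₜ[k] (1 : A)) * Δ h := by
  classical
  -- notation
  let A2 := Algebra.TensorProduct.assoc k k k A A A
  -- `F` plays the role of `(Δ h)₁₂` in `A ⊗ (A ⊗ A)`.
  -- Step (s4): `F * Δ₂ c = assoc (Δ h ⊗ c)` coming from `(h ⊗ 1) Δ c = h ⊗ c`.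
  have s4 : ∀ c : A,
      A2 (Δ h ⊗ₜ[k] (1 : A)) *
        ((Algebra.TensorProduct.map (AlgHom.id k A) Δ) (Δ c)) =
      A2 (Δ h ⊗ₜ[k] c) := by
    intro c
    have h1 := congrArg
      (fun u => A2 ((Algebra.TensorProduct.map Δ (AlgHom.id k A)) u)) (hh2' c)
    simp only [map_mul, Algebra.TensorProduct.map_tmul, AlgHom.coe_id, id_eq] at h1
    rw [hco c] at h1
    exact h1
  -- Step (s5): `Δ₂ c * (1 ⊗ Δ h) = c ⊗ Δ h` coming from `Δ c (1 ⊗ h) = c ⊗ h`.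
  have s5 : ∀ c : A,
      ((Algebra.TensorProduct.map (AlgHom.id k A) Δ) (Δ c)) *
        ((1 : A) ⊗ₜ[k] Δ h) =
      c ⊗ₜ[k] Δ h := by
    intro c
    have h1 := congrArg (Algebra.TensorProduct.map (AlgHom.id k A) Δ) (hh1 c)
    simp only [map_mul, Algebra.TensorProduct.map_tmul, AlgHom.coe_id, id_eq] at h1
    exact h1
  -- Step (e1): `F * (1 ⊗ (1 ⊗ a)) = assoc (Δ h ⊗ a)`.
  have e1 : A2 (Δ h ⊗ₜ[k] (1 : A)) * ((1 : A) ⊗ₜ[k] ((1 : A) ⊗ₜ[k] a)) =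
      A2 (Δ h ⊗ₜ[k] a) := by
    have := stmt15_aux (k := k) (Δ h) (1 : A) a
    rwa [← Algebra.TensorProduct.one_def, mul_one] at this
  -- Step (s7): push `hab` into `A ⊗ (A ⊗ A)` along `u ↦ assoc (u ⊗ 1)`.
  have hmul1 : ∀ u v : A ⊗[k] A,
      (u * v) ⊗ₜ[k] (1 : A) = (u ⊗ₜ[k] (1 : A)) * (v ⊗ₜ[k] (1 : A)) := by
    intro u v
    rw [Algebra.TensorProduct.tmul_mul_tmul, mul_one]
  have s7 : A2 (Δ h ⊗ₜ[k] (1 : A)) * (a ⊗ₜ[k] ((1 : A) ⊗ₜ[k] (1 : A))) =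
      A2 (Δ h ⊗ₜ[k] (1 : A)) * ((1 : A) ⊗ₜ[k] (b ⊗ₜ[k] (1 : A))) := by
    have h1 := congrArg (fun u => A2 (u ⊗ₜ[k] (1 : A))) hab
    rw [hmul1, hmul1, map_mul, map_mul,
      Algebra.TensorProduct.assoc_tmul, Algebra.TensorProduct.assoc_tmul] at h1
    exact h1
  -- Main chain: `F * (1 ⊗ t₁) = F * (1 ⊗ t₂)`.
  have hmain : A2 (Δ h ⊗ₜ[k] (1 : A)) *
      ((1 : A) ⊗ₜ[k] (((1 : A) ⊗ₜ[k] a) * Δ h)) =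
      A2 (Δ h ⊗ₜ[k] (1 : A)) *
      ((1 : A) ⊗ₜ[k] ((b ⊗ₜ[k] (1 : A)) * Δ h)) := by
    calc A2 (Δ h ⊗ₜ[k] (1 : A)) * ((1 : A) ⊗ₜ[k] (((1 : A) ⊗ₜ[k] a) * Δ h))
        = A2 (Δ h ⊗ₜ[k] (1 : A)) *
            (((1 : A) ⊗ₜ[k] ((1 : A) ⊗ₜ[k] a)) * ((1 : A) ⊗ₜ[k] Δ h)) := by
          rw [Algebra.TensorProduct.tmul_mul_tmul, one_mul]
      _ = (A2 (Δ h ⊗ₜ[k] (1 : A)) * ((1 : A) ⊗ₜ[k] ((1 : A) ⊗ₜ[k] a))) *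
            ((1 : A) ⊗ₜ[k] Δ h) := by rw [mul_assoc]
      _ = A2 (Δ h ⊗ₜ[k] a) * ((1 : A) ⊗ₜ[k] Δ h) := by rw [e1]
      _ = (A2 (Δ h ⊗ₜ[k] (1 : A)) *
            ((Algebra.TensorProduct.map (AlgHom.id k A) Δ) (Δ a))) *
            ((1 : A) ⊗ₜ[k] Δ h) := by rw [s4 a]
      _ = A2 (Δ h ⊗ₜ[k] (1 : A)) *
            (((Algebra.TensorProduct.map (AlgHom.id k A) Δ) (Δ a)) *
              ((1 : A) ⊗ₜ[k] Δ h)) := by rw [mul_assoc]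
      _ = A2 (Δ h ⊗ₜ[k] (1 : A)) * (a ⊗ₜ[k] Δ h) := by rw [s5 a]
      _ = A2 (Δ h ⊗ₜ[k] (1 : A)) *
            ((a ⊗ₜ[k] ((1 : A) ⊗ₜ[k] (1 : A))) * ((1 : A) ⊗ₜ[k] Δ h)) := by
          rw [Algebra.TensorProduct.tmul_mul_tmul, mul_one,
            ← Algebra.TensorProduct.one_def, one_mul]
      _ = (A2 (Δ h ⊗ₜ[k] (1 : A)) * (a ⊗ₜ[k] ((1 : A) ⊗ₜ[k] (1 : A)))) *
            ((1 : A) ⊗ₜ[k] Δ h) := by rw [mul_assoc]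
      _ = (A2 (Δ h ⊗ₜ[k] (1 : A)) * ((1 : A) ⊗ₜ[k] (b ⊗ₜ[k] (1 : A)))) *
            ((1 : A) ⊗ₜ[k] Δ h) := by rw [s7]
      _ = A2 (Δ h ⊗ₜ[k] (1 : A)) *
            (((1 : A) ⊗ₜ[k] (b ⊗ₜ[k] (1 : A))) * ((1 : A) ⊗ₜ[k] Δ h)) := by
          rw [mul_assoc]
      _ = A2 (Δ h ⊗ₜ[k] (1 : A)) *
            ((1 : A) ⊗ₜ[k] ((b ⊗ₜ[k] (1 : A)) * Δ h)) := by
          rw [Algebra.TensorProduct.tmul_mul_tmul, one_mul]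
  -- Cancellation via injectivity of `c ↦ Δ h * (1 ⊗ c)`.
  let L : A →ₗ[k] A ⊗[k] A :=
    (LinearMap.mulLeft k (Δ h)).comp ((TensorProduct.mk k A A) 1)
  have hLapply : ∀ c : A, L c = Δ h * ((1 : A) ⊗ₜ[k] c) := fun c => rfl
  have hLinj : Function.Injective L := by
    intro x y hxy
    have hz : L (x - y) = 0 := by rw [map_sub, hxy, sub_self]
    have := hinj (x - y) (by rw [← hLapply]; exact hz)
    exact sub_eq_zero.mp this
  have hC2 : ∀ t : A ⊗[k] A,
      A2 (Δ h ⊗ₜ[k] (1 : A)) * ((1 : A) ⊗ₜ[k] t) =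
      A2 ((LinearMap.rTensor A L) t) := by
    intro t
    induction t using TensorProduct.induction_on with
    | zero => simp
    | tmul c d =>
        rw [LinearMap.rTensor_tmul, hLapply]
        exact stmt15_aux (k := k) (Δ h) c d
    | add u v hu hv =>
        simp only [TensorProduct.tmul_add, mul_add, map_add, hu, hv]
  rw [hC2, hC2] at hmain
  have h2 := A2.injective hmain
  exact Module.Flat.rTensor_preserves_injective_linearMap L hLinj h2
end

section
/- Assume Δ is coassociative and h ∈ A satisfies Δ(a)·(1 ⊗ h) = (1 ⊗ h)·Δ(a) = a ⊗ h and Δ(a)·(h ⊗ 1) = (h ⊗ 1)·Δ(a) = h ⊗ a for every a ∈ A. If a, b ∈ A satisfy Δ(h)·(a ⊗ 1) = Δ(h)·(1 ⊗ b) (i.e. b = S(a)), then in A ⊗ A ⊗ A ⊗ A: Δ(h)₂₃ · Δ(h)₁₄ · (Δ(a))₁₂ = Δ(h)₂₃ · Δ(h)₁₄ · (Δ(b))₃₄. -/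
set_option maxHeartbeats 1000000
set_option synthInstance.maxHeartbeats 1000000


open scoped TensorProduct

section Aux

variable {k A : Type*} [Field k] [Ring A] [Algebra k A]

/-- Work around a reducible-transparency unification failure for nested tensor products. -/
instance : RightDistribClass (A ⊗[k] (A ⊗[k] A)) := ⟨fun a b c => Distrib.right_distrib a b c⟩
instance : LeftDistribClass (A ⊗[k] (A ⊗[k] A)) := ⟨fun a b c => Distrib.left_distrib a b c⟩
instance : RightDistribClass (A ⊗[k] (A ⊗[k] (A ⊗[k] A))) :=
  ⟨fun a b c => Distrib.right_distrib a b c⟩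
instance : LeftDistribClass (A ⊗[k] (A ⊗[k] (A ⊗[k] A))) :=
  ⟨fun a b c => Distrib.left_distrib a b c⟩

/-- `(Δ ⊗ id)` reassociated: `A ⊗ A → A ⊗ (A ⊗ A)`. -/
noncomputable def auxF (Δ : A →ₐ[k] A ⊗[k] A) : A ⊗[k] A →ₐ[k] A ⊗[k] (A ⊗[k] A) :=
  (Algebra.TensorProduct.assoc k k k A A A).toAlgHom.comp
    (Algebra.TensorProduct.map Δ (AlgHom.id k A))

/-- `id ⊗ Δ : A ⊗ A → A ⊗ (A ⊗ A)`. -/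
noncomputable def auxN (Δ : A →ₐ[k] A ⊗[k] A) : A ⊗[k] A →ₐ[k] A ⊗[k] (A ⊗[k] A) :=
  Algebra.TensorProduct.map (AlgHom.id k A) Δ

/-- Apply `Δ` to the middle leg of a 3-fold tensor. -/
noncomputable def auxPhi (Δ : A →ₐ[k] A ⊗[k] A) :
    A ⊗[k] (A ⊗[k] A) →ₐ[k] A ⊗[k] (A ⊗[k] (A ⊗[k] A)) :=
  Algebra.TensorProduct.map (AlgHom.id k A) (auxF Δ)

/-- Apply `Δ` to the last leg of a 3-fold tensor. -/
noncomputable def auxPsi (Δ : A →ₐ[k] A ⊗[k] A) :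
    A ⊗[k] (A ⊗[k] A) →ₐ[k] A ⊗[k] (A ⊗[k] (A ⊗[k] A)) :=
  Algebra.TensorProduct.map (AlgHom.id k A) (auxN Δ)

lemma aux_hT0 (u : A ⊗[k] A) (x y : A) :
    x ⊗ₜ[k] ((Algebra.TensorProduct.assoc k k k A A A) (u ⊗ₜ[k] y))
      = leg23 k A u * leg14 k A (x ⊗ₜ[k] y) := by
  induction u using TensorProduct.induction_on with
  | zero =>
      rw [TensorProduct.zero_tmul, map_zero, TensorProduct.tmul_zero, map_zero]
      exact (zero_mul (leg14 k A (x ⊗ₜ[k] y))).symm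
  | tmul p q =>
      simp [leg23, leg14, Algebra.TensorProduct.assoc_tmul,
        Algebra.TensorProduct.tmul_mul_tmul, Algebra.TensorProduct.one_def]
  | add u v hu hv =>
      rw [TensorProduct.add_tmul, map_add, TensorProduct.tmul_add, hu, hv, map_add, add_mul]

lemma aux_hW (Δ : A →ₐ[k] A ⊗[k] A) (h : A)
    (hh2' : ∀ a : A, (h ⊗ₜ[k] (1 : A)) * Δ a = h ⊗ₜ[k] a) (w : A ⊗[k] A) :
    ((1 : A) ⊗ₜ[k] (h ⊗ₜ[k] (1 : A))) * auxN Δ w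
      = TensorProduct.map (LinearMap.id : A →ₗ[k] A) (TensorProduct.mk k A A h) w := by
  induction w using TensorProduct.induction_on with
  | zero => simp
  | tmul x y =>
      simp [auxN, Algebra.TensorProduct.tmul_mul_tmul, hh2' y]
  | add u v hu hv => simp only [map_add, mul_add, hu, hv]

lemma aux_hT (Δ : A →ₐ[k] A ⊗[k] A) (h : A) (w : A ⊗[k] A) :
    auxPhi Δ (TensorProduct.map (LinearMap.id : A →ₗ[k] A) (TensorProduct.mk k A A h) w)
      = leg23 k A (Δ h) * leg14 k A w := by
  induction w using TensorProduct.induction_on with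
  | zero =>
      rw [map_zero, map_zero, map_zero]
      exact (mul_zero (leg23 k A (Δ h))).symm
  | tmul x y =>
      have h0 : (TensorProduct.map (LinearMap.id : A →ₗ[k] A)
          (TensorProduct.mk k A A h)) (x ⊗ₜ[k] y) = x ⊗ₜ[k] (h ⊗ₜ[k] y) := rfl
      have h1 : auxPhi Δ (x ⊗ₜ[k] (h ⊗ₜ[k] y))
          = x ⊗ₜ[k] ((Algebra.TensorProduct.assoc k k k A A A) (Δ h ⊗ₜ[k] y)) := by
        simp [auxPhi, auxF]
      rw [h0, h1, aux_hT0]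
  | add u v hu hv => rw [map_add, map_add, hu, hv, map_add, mul_add]

lemma aux_hPhiPsi (Δ : A →ₐ[k] A ⊗[k] A)
    (hco : ∀ a : A,
      (Algebra.TensorProduct.assoc k k k A A A)
        ((Algebra.TensorProduct.map Δ (AlgHom.id k A)) (Δ a)) =
      (Algebra.TensorProduct.map (AlgHom.id k A) Δ) (Δ a))
    (w : A ⊗[k] A) :
    auxPhi Δ (auxN Δ w) = auxPsi Δ (auxN Δ w) := by
  induction w using TensorProduct.induction_on with
  | zero => simp
  | tmul x y =>
      simp [auxPhi, auxPsi, auxN, auxF, hco y]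
  | add u v hu hv => simp only [map_add, hu, hv]

lemma aux_h12 (Δ : A →ₐ[k] A ⊗[k] A) (v : A ⊗[k] A) :
    auxPsi Δ ((Algebra.TensorProduct.assoc k k k A A A) (v ⊗ₜ[k] (1 : A)))
      = leg12 k A v := by
  induction v using TensorProduct.induction_on with
  | zero => simp
  | tmul x y =>
      simp [auxPsi, auxN, leg12, Algebra.TensorProduct.assoc_tmul,
        Algebra.TensorProduct.one_def]
  | add u v hu hv =>
      simp only [TensorProduct.add_tmul, map_add, hu, hv]

end Aux


/-- Algebraic analogue of the paper's Proposition 4.7: if `Δ(h)(a ⊗ 1) = Δ(h)(1 ⊗ b)`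
(i.e. `b = S(a)`), then `Δ(h)₂₃ Δ(h)₁₄ (Δ(a))₁₂ = Δ(h)₂₃ Δ(h)₁₄ (Δ(b))₃₄`. -/
theorem stmt16 {k A : Type*} [Field k] [Ring A] [Algebra k A]
    (Δ : A →ₐ[k] A ⊗[k] A)
    (hco : ∀ a : A,
      (Algebra.TensorProduct.assoc k k k A A A)
        ((Algebra.TensorProduct.map Δ (AlgHom.id k A)) (Δ a)) =
      (Algebra.TensorProduct.map (AlgHom.id k A) Δ) (Δ a))
    (h : A)
    (hh1 : ∀ a : A, Δ a * ((1 : A) ⊗ₜ[k] h) = a ⊗ₜ[k] h)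
    (hh1' : ∀ a : A, ((1 : A) ⊗ₜ[k] h) * Δ a = a ⊗ₜ[k] h)
    (hh2 : ∀ a : A, Δ a * (h ⊗ₜ[k] (1 : A)) = h ⊗ₜ[k] a)
    (hh2' : ∀ a : A, (h ⊗ₜ[k] (1 : A)) * Δ a = h ⊗ₜ[k] a)
    (a b : A)
    (hab : Δ h * (a ⊗ₜ[k] (1 : A)) = Δ h * ((1 : A) ⊗ₜ[k] b)) :
    leg23 k A (Δ h) * leg14 k A (Δ h) * leg12 k A (Δ a) =
      leg23 k A (Δ h) * leg14 k A (Δ h) * leg34 k A (Δ b) := by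
  -- abbreviations
  have hΦ1 : auxPhi Δ ((1 : A) ⊗ₜ[k] (h ⊗ₜ[k] (1 : A))) = leg23 k A (Δ h) := by
    have h0 : auxPhi Δ ((1 : A) ⊗ₜ[k] (h ⊗ₜ[k] (1 : A)))
        = (1 : A) ⊗ₜ[k] ((Algebra.TensorProduct.assoc k k k A A A) (Δ h ⊗ₜ[k] (1 : A))) := by
      simp [auxPhi, auxF]
    rw [h0, aux_hT0 (Δ h) 1 1]
    have : ((1 : A) ⊗ₜ[k] (1 : A)) = (1 : A ⊗[k] A) := (Algebra.TensorProduct.one_def).symm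
    have h14one : leg14 k A (1 : A ⊗[k] A) = 1 := (leg14 k A).map_one'
    rw [this, h14one]
    exact mul_one (leg23 k A (Δ h))
  -- Step A : Δ(h)₂₃ Δ(h)₁₄ = Δ(h)₂₃ · ψ(N(Δh))
  have key : leg23 k A (Δ h) * leg14 k A (Δ h)
      = leg23 k A (Δ h) * auxPsi Δ (auxN Δ (Δ h)) := by
    calc leg23 k A (Δ h) * leg14 k A (Δ h)
        = auxPhi Δ (TensorProduct.map (LinearMap.id : A →ₗ[k] A)
            (TensorProduct.mk k A A h) (Δ h)) := (aux_hT Δ h (Δ h)).symm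
      _ = auxPhi Δ (((1 : A) ⊗ₜ[k] (h ⊗ₜ[k] (1 : A))) * auxN Δ (Δ h)) := by
            rw [aux_hW Δ h hh2']
      _ = auxPhi Δ ((1 : A) ⊗ₜ[k] (h ⊗ₜ[k] (1 : A))) * auxPhi Δ (auxN Δ (Δ h)) :=
            map_mul _ _ _
      _ = leg23 k A (Δ h) * auxPsi Δ (auxN Δ (Δ h)) := by
            rw [hΦ1, aux_hPhiPsi Δ hco]
  -- Step B : ψ(N(Δh)) · Δ(a)₁₂ = ψ(N(Δh)) · Δ(b)₃₄
  have hu : auxN Δ (Δ h)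
      = (Algebra.TensorProduct.assoc k k k A A A)
          ((Algebra.TensorProduct.map Δ (AlgHom.id k A)) (Δ h)) := (hco h).symm
  have h12a : auxPsi Δ ((Algebra.TensorProduct.assoc k k k A A A)
      ((Algebra.TensorProduct.map Δ (AlgHom.id k A)) (a ⊗ₜ[k] (1 : A))))
      = leg12 k A (Δ a) := by
    have : (Algebra.TensorProduct.map Δ (AlgHom.id k A)) (a ⊗ₜ[k] (1 : A))
        = Δ a ⊗ₜ[k] (1 : A) := by simp
    rw [this, aux_h12]
  have h34a : auxPsi Δ ((Algebra.TensorProduct.assoc k k k A A A)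
      ((Algebra.TensorProduct.map Δ (AlgHom.id k A)) ((1 : A) ⊗ₜ[k] b)))
      = leg34 k A (Δ b) := by
    have h1 : (Algebra.TensorProduct.map Δ (AlgHom.id k A)) ((1 : A) ⊗ₜ[k] b)
        = ((1 : A) ⊗ₜ[k] (1 : A)) ⊗ₜ[k] b := by
      simp [Algebra.TensorProduct.one_def]
    rw [h1, Algebra.TensorProduct.assoc_tmul]
    simp [auxPsi, auxN, leg34, Algebra.TensorProduct.includeRight_apply]
  have stepB : auxPsi Δ (auxN Δ (Δ h)) * leg12 k A (Δ a)
      = auxPsi Δ (auxN Δ (Δ h)) * leg34 k A (Δ b) := by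
    rw [hu, ← h12a, ← h34a, ← map_mul, ← map_mul, ← map_mul, hab, map_mul, map_mul, map_mul]
  have assoc1 : ∀ x y z : A ⊗[k] (A ⊗[k] (A ⊗[k] A)), x * y * z = x * (y * z) :=
    fun x y z => mul_assoc x y z
  rw [key, assoc1, assoc1, stepB]
end

section
/- Suppose h ∈ H satisfies h·a = ε(a)·h for every a ∈ H. Then Δ(h)·(a ⊗ 1) = Δ(h)·(1 ⊗ S(a)) for every a ∈ H. -/
/-!
In Sweedler notation, every Hopf algebra satisfies `∑ Δ(a₁) (1 ⊗ S a₂) = a ⊗ 1`: by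
coassociativity the left side is `∑ a₁ ⊗ a₂ S(a₃)`, which the antipode axiom collapses.
Multiplying by `Δ h` on the left and using `Δ h · Δ a₁ = Δ (h a₁) = ε(a₁) Δ h`, the same sum
becomes `Δ h (1 ⊗ S (∑ ε(a₁) a₂)) = Δ h (1 ⊗ S a)`.
-/

open scoped TensorProduct

open Coalgebra

namespace HopfAlgebra

open TensorProduct

variable {R H : Type*} [CommSemiring R] [Semiring H] [HopfAlgebra R H]

variable (R H) in
noncomputable def comulMulOneTmulAntipode : H ⊗[R] H →ₗ[R] H ⊗[R] H :=
  LinearMap.mul' R (H ⊗[R] H) ∘ₗ map comul (TensorProduct.mk R H H 1 ∘ₗ antipode R)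

@[simp]
lemma comulMulOneTmulAntipode_tmul (x y : H) :
    comulMulOneTmulAntipode R H (x ⊗ₜ y) = comul x * (1 ⊗ₜ antipode R y) := by
  simp [comulMulOneTmulAntipode]

lemma lTensor_mul_antipode_assoc_tmul (z : H ⊗[R] H) (y : H) :
    (LinearMap.mul' R H ∘ₗ (antipode R).lTensor H).lTensor H
        (TensorProduct.assoc R H H H (z ⊗ₜ y)) =
      z * (1 ⊗ₜ antipode R y) := by
  induction z using TensorProduct.induction_on with
  | zero => simp
  | tmul u v => simp
  | add z₁ z₂ h₁ h₂ => simp only [add_tmul, map_add, h₁, h₂, add_mul]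

lemma comulMulOneTmulAntipode_eq_lTensor_comp_assoc_comp_rTensor :
    comulMulOneTmulAntipode R H =
      (LinearMap.mul' R H ∘ₗ (antipode R).lTensor H).lTensor H ∘ₗ
        (TensorProduct.assoc R H H H).toLinearMap ∘ₗ (comul (R := R) (A := H)).rTensor H := by
  ext x y
  simp [lTensor_mul_antipode_assoc_tmul]

lemma comulMulOneTmulAntipode_comul (a : H) :
    comulMulOneTmulAntipode R H (comul a) = a ⊗ₜ 1 := by
  rw [comulMulOneTmulAntipode_eq_lTensor_comp_assoc_comp_rTensor, LinearMap.comp_apply,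
    LinearMap.comp_apply, LinearEquiv.coe_coe, coassoc_apply, ← LinearMap.lTensor_comp_apply,
    LinearMap.comp_assoc, mul_antipode_lTensor_comul, LinearMap.lTensor_comp_apply,
    lTensor_counit_comul]
  simp

end HopfAlgebra

open HopfAlgebra

/-- The Hopf-algebra computation motivating the paper's Definition 4.1: if `h·a = ε(a)·h`
for all `a`, then `Δ(h)(a ⊗ 1) = Δ(h)(1 ⊗ S(a))`. -/
theorem stmt17 {R H : Type*} [CommRing R] [Ring H] [HopfAlgebra R H]
    (h : H) (hh : ∀ a : H, h * a = (Coalgebra.counit (R := R) a) • h) :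
    ∀ a : H,
      Coalgebra.comul (R := R) h * (a ⊗ₜ[R] (1 : H)) =
      Coalgebra.comul (R := R) h * ((1 : H) ⊗ₜ[R] (HopfAlgebra.antipode (R := R) a)) := by
  intro a
  have comul_h_mul_comul (x : H) :
      comul (R := R) h * comul x = counit (R := R) x • comul h := by
    rw [← Bialgebra.comul_mul, hh, map_smul]
  have mulLeft_comul_h_comp : LinearMap.mulLeft R (comul h) ∘ₗ comulMulOneTmulAntipode R H =
      LinearMap.mulLeft R (comul h) ∘ₗ TensorProduct.mk R H H 1 ∘ₗ antipode R ∘ₗ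
        (TensorProduct.lid R H).toLinearMap ∘ₗ (counit (R := R) (A := H)).rTensor H := by
    ext x y
    simp [← mul_assoc, comul_h_mul_comul]
  calc comul h * (a ⊗ₜ[R] 1)
      = comul h * comulMulOneTmulAntipode R H (comul a) := by
        rw [comulMulOneTmulAntipode_comul]
    _ = comul h * (1 ⊗ₜ[R] antipode R a) := by
        simpa using congr($mulLeft_comul_h_comp (comul a))
end

section
/- Suppose h ∈ H satisfies a·h = ε(a)·h for every a ∈ H. Then (1 ⊗ a)·Δ(h) = (S(a) ⊗ 1)·Δ(h) for every a ∈ H. -/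
open scoped TensorProduct

open Coalgebra in
/-- The Hopf-algebra verification carried out in the paper after Proposition 4.5: if
`a·h = ε(a)·h` for all `a`, then `(1 ⊗ a)Δ(h) = (S(a) ⊗ 1)Δ(h)`. -/
theorem stmt18 {R H : Type*} [CommRing R] [Ring H] [HopfAlgebra R H]
    (h : H) (hh : ∀ a : H, a * h = (Coalgebra.counit (R := R) a) • h) :
    ∀ a : H,
      ((1 : H) ⊗ₜ[R] a) * Coalgebra.comul (R := R) h =
      ((HopfAlgebra.antipode (R := R) a) ⊗ₜ[R] (1 : H)) * Coalgebra.comul (R := R) h := by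
  intro a
  classical
  set S : H →ₗ[R] H := HopfAlgebra.antipode (R := R) with hS
  let r : Coalgebra.Repr R a (H × H) := Coalgebra.Repr.arbitrary R a
  -- a = ∑ ε(a₂) • a₁
  have ha : ∑ i ∈ r.index, counit (R := R) (r.right i) • r.left i = a := by
    have := Coalgebra.sum_tmul_counit_eq r
    apply_fun (TensorProduct.rid R H) at this
    rw [map_sum] at this
    simp only [TensorProduct.rid_tmul, map_one, one_smul] at this
    exact this
  -- key identity: ∑ (S a₁ ⊗ 1) * Δ a₂ = 1 ⊗ a
  have key : ∑ i ∈ r.index, ((S (r.left i)) ⊗ₜ[R] (1 : H)) * Coalgebra.comul (R := R) (r.right i)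
      = (1 : H) ⊗ₜ[R] a := by
    set a₁ : (i : H × H) → Coalgebra.Repr R (r.left i) (H × H) := fun i => Coalgebra.Repr.arbitrary R _
    set a₂ : (i : H × H) → Coalgebra.Repr R (r.right i) (H × H) := fun i => Coalgebra.Repr.arbitrary R _
    have coassoc := Coalgebra.sum_tmul_tmul_eq r a₁ a₂
    -- apply G : x ⊗ (y ⊗ z) ↦ (S x * y) ⊗ z
    set G : H ⊗[R] (H ⊗[R] H) →ₗ[R] H ⊗[R] H :=
      LinearMap.rTensor H (LinearMap.mul' R H ∘ₗ LinearMap.rTensor H S)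
        ∘ₗ (TensorProduct.assoc R H H H).symm.toLinearMap with hG
    have hGt : ∀ x y z : H, G (x ⊗ₜ[R] (y ⊗ₜ[R] z)) = (S x * y) ⊗ₜ[R] z := by
      intro x y z; simp [hG]
    apply_fun G at coassoc
    simp only [map_sum, hGt] at coassoc
    -- left side of coassoc: ∑ i ∑ j (S (a₁ i).left j * (a₁ i).right j) ⊗ r.right i
    -- equals ∑ i (ε (r.left i) • 1) ⊗ r.right i = 1 ⊗ a
    have hL : ∑ i ∈ r.index, ∑ j ∈ (a₁ i).index,
        (S ((a₁ i).left j) * (a₁ i).right j) ⊗ₜ[R] r.right i = (1 : H) ⊗ₜ[R] a := by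
      have step : ∀ i ∈ r.index, ∑ j ∈ (a₁ i).index,
          (S ((a₁ i).left j) * (a₁ i).right j) ⊗ₜ[R] r.right i
          = (counit (R := R) (r.left i) • (1 : H)) ⊗ₜ[R] r.right i := by
        intro i _
        rw [← TensorProduct.sum_tmul, HopfAlgebra.sum_antipode_mul_eq_smul (a₁ i)]
      rw [Finset.sum_congr rfl step]
      have := Coalgebra.sum_counit_tmul_eq r
      apply_fun (TensorProduct.lid R H) at this
      rw [map_sum] at this
      simp only [TensorProduct.lid_tmul, map_one, one_smul] at this
      calc ∑ i ∈ r.index, (counit (R := R) (r.left i) • (1 : H)) ⊗ₜ[R] r.right i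
          = (1 : H) ⊗ₜ[R] ∑ i ∈ r.index, counit (R := R) (r.left i) • r.right i := by
            rw [TensorProduct.tmul_sum]
            exact Finset.sum_congr rfl fun i _ => by
              rw [TensorProduct.smul_tmul]
        _ = (1 : H) ⊗ₜ[R] a := by rw [this]
    -- right side of coassoc equals the sum in `key`
    have hR : ∑ i ∈ r.index, ((S (r.left i)) ⊗ₜ[R] (1 : H)) * Coalgebra.comul (R := R) (r.right i)
        = ∑ i ∈ r.index, ∑ j ∈ (a₂ i).index,
          (S (r.left i) * (a₂ i).left j) ⊗ₜ[R] (a₂ i).right j := by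
      refine Finset.sum_congr rfl fun i _ => ?_
      rw [← (a₂ i).eq, Finset.mul_sum]
      exact Finset.sum_congr rfl fun j _ => by
        rw [Algebra.TensorProduct.tmul_mul_tmul, one_mul]
    rw [hR, ← coassoc, hL]
  -- now conclude
  symm
  calc ((S a) ⊗ₜ[R] (1 : H)) * Coalgebra.comul (R := R) h
      = (∑ i ∈ r.index, ((S (r.left i)) ⊗ₜ[R] (1 : H))
          * Coalgebra.comul (R := R) (r.right i))
          * Coalgebra.comul (R := R) h := by
        conv_lhs => rw [← ha]
        rw [map_sum, TensorProduct.sum_tmul, Finset.sum_mul, Finset.sum_mul]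
        refine Finset.sum_congr rfl fun i _ => ?_
        rw [map_smul, ← TensorProduct.smul_tmul', smul_mul_assoc, mul_assoc,
          ← Bialgebra.comul_mul, hh (r.right i), map_smul, mul_smul_comm]
    _ = ((1 : H) ⊗ₜ[R] a) * Coalgebra.comul (R := R) h := by rw [key]
end

section
/- Let x, y ∈ A with 0 ≤ x ≤ y, and let ε > 0 be a real number. Then y + ε·1 is invertible in A, √x · (y + ε·1)⁻¹ · √x ≤ 1, and ‖x − √x · y · (y + ε·1)⁻¹ · √x‖ ≤ ε. -/
/-!
Put `b = y + ε • 1`, which is strictly positive. From `y * b⁻¹ = 1 - ε • b⁻¹` one gets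
`x - √x * y * b⁻¹ * √x = ε • (√x * b⁻¹ * √x)`, so both estimates follow from
`‖√x * b⁻¹ * √x‖ ≤ 1`. Writing `√x * b⁻¹ * √x = u * star u` with `u = √x * √(b⁻¹)`, this is
`‖u‖ ≤ 1`, which is equivalent to `x ≤ b`.
-/

open CFC Ring

section

variable {A : Type*} [CStarAlgebra A] [PartialOrder A] [StarOrderedRing A]

lemma sqrt_mul_ringInverse_mul_sqrt_eq_mul_star (a b : A) (hb : IsStrictlyPositive b) :
    sqrt a * b⁻¹ʳ * sqrt a = (sqrt a * sqrt b⁻¹ʳ) * star (sqrt a * sqrt b⁻¹ʳ) := by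
  rw [star_mul, (sqrt_nonneg a).star_eq, (sqrt_nonneg b⁻¹ʳ).star_eq]
  conv_lhs => rw [← sqrt_mul_sqrt_self b⁻¹ʳ hb.ringInverse.nonneg]
  simp only [mul_assoc]

lemma norm_sqrt_mul_ringInverse_mul_sqrt_le_one {a b : A} (ha : 0 ≤ a) (hab : a ≤ b)
    (hb : IsStrictlyPositive b) : ‖sqrt a * b⁻¹ʳ * sqrt a‖ ≤ 1 := by
  lift b to Aˣ using hb.isUnit
  have hu : ‖sqrt a * sqrt (↑b⁻¹ : A)‖ ≤ 1 := (le_iff_norm_sqrt_mul_sqrt_inv ha hb.nonneg).mp hab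
  rw [sqrt_mul_ringInverse_mul_sqrt_eq_mul_star a _ hb, CStarRing.norm_self_mul_star,
    inverse_unit]
  exact mul_le_one₀ hu (norm_nonneg _) hu

lemma sqrt_mul_ringInverse_mul_sqrt_le_one {a b : A} (ha : 0 ≤ a) (hab : a ≤ b)
    (hb : IsStrictlyPositive b) : sqrt a * b⁻¹ʳ * sqrt a ≤ 1 := by
  have hnonneg : 0 ≤ sqrt a * b⁻¹ʳ * sqrt a := by
    rw [sqrt_mul_ringInverse_mul_sqrt_eq_mul_star a b hb]
    exact mul_star_self_nonneg _
  exact (CStarAlgebra.norm_le_one_iff_of_nonneg _ hnonneg).mp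
    (norm_sqrt_mul_ringInverse_mul_sqrt_le_one ha hab hb)

end

lemma mul_self_sub_mul_mul_ringInverse_add_smul_one {R A : Type*} [CommRing R] [Ring A]
    [Algebra R A] {s y : A} (c : R) (h : IsUnit (y + c • (1 : A))) :
    s * s - s * y * (y + c • 1)⁻¹ʳ * s = c • (s * (y + c • 1)⁻¹ʳ * s) := by
  have hy : y * (y + c • 1)⁻¹ʳ = 1 - c • (y + c • 1)⁻¹ʳ := by
    rw [eq_sub_iff_add_eq, ← smul_one_mul c (y + c • 1)⁻¹ʳ, ← add_mul, mul_inverse_cancel _ h]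
  rw [mul_assoc s y, hy, mul_sub, sub_mul, mul_one, mul_smul_comm, smul_mul_assoc, sub_sub_cancel]

/-- The estimates inside the proof of the paper's Proposition 5.4: for `0 ≤ x ≤ y` in a unital
C*-algebra and `ε > 0`, the element `y + ε·1` is invertible,
`√x · (y + ε·1)⁻¹ · √x ≤ 1`, and `‖x − √x · y · (y + ε·1)⁻¹ · √x‖ ≤ ε`. -/
theorem stmt19 {A : Type*} [CStarAlgebra A] [PartialOrder A] [StarOrderedRing A]
    (x y : A) (hx : 0 ≤ x) (hxy : x ≤ y) (ε : ℝ) (hε : 0 < ε) :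
    IsUnit (y + ε • (1 : A)) ∧
    CFC.sqrt x * Ring.inverse (y + ε • (1 : A)) * CFC.sqrt x ≤ 1 ∧
    ‖x - CFC.sqrt x * y * Ring.inverse (y + ε • (1 : A)) * CFC.sqrt x‖ ≤ ε := by
  have hε1 : IsStrictlyPositive (ε • (1 : A)) := .smul hε isStrictlyPositive_one
  have hB : IsStrictlyPositive (y + ε • (1 : A)) := hε1.nonneg_add (hx.trans hxy)
  have hxB : x ≤ y + ε • (1 : A) := hxy.trans (le_add_of_nonneg_right hε1.nonneg)
  refine ⟨hB.isUnit, sqrt_mul_ringInverse_mul_sqrt_le_one hx hxB hB, ?_⟩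
  calc ‖x - sqrt x * y * (y + ε • 1)⁻¹ʳ * sqrt x‖
      = ‖ε • (sqrt x * (y + ε • 1)⁻¹ʳ * sqrt x)‖ := by
        rw [← mul_self_sub_mul_mul_ringInverse_add_smul_one ε hB.isUnit, sqrt_mul_sqrt_self x hx]
    _ ≤ ε := by
        rw [norm_smul, Real.norm_of_nonneg hε.le]
        exact mul_le_of_le_one_right hε.le (norm_sqrt_mul_ringInverse_mul_sqrt_le_one hx hxB hB)
end
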